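/- arXiv:math/0510054 — 8 statements merged into one kernel-verified Lean document; each statement's English description precedes it below -/
import Mathlib

section
/- For every complex number x with |x| < 1, the infinite product ∏_{m=1}^∞ (1 − x^m) converges and equals the absolutely convergent series ∑_{n ∈ ℤ} (−1)^n x^{n(3n−1)/2} (Euler's pentagonal number theorem). -/
/-!
The algebra is Mathlib's `Pentagonal.tprod_one_sub_pow`: with
`A k = ∑ n, x ^ ((k + 1) * n) * ∏ i ≤ n, (1 - x ^ (k + i + 1))` one has the telescoping recurrence
`A k = 1 - x ^ (2k + 3) - x ^ (3k + 5) * A (k + 1)`, and iterating it expresses `∏ (1 - x ^ m)` as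
a partial pentagonal sum plus a remainder, in any topological ring. For `‖x‖ < 1` all the
convergence it needs comes from one uniform bound, `‖∏ j ∈ s, (1 - x ^ j)‖ ≤ exp (1 - ‖x‖)⁻¹`,
which dominates each `A k` by a geometric series independently of `k`. Absolute convergence of the
sum over `ℤ`, needed to ungroup Mathlib's paired sum, holds because `pentagonal` is injective.
-/

open Filter Topology

section NormedRing

variable {R : Type*} [NormedCommRing R] [NormOneClass R] {x : R}

theorem norm_prod_one_sub_pow_le_exp (hx : ‖x‖ < 1) (k : ℕ) (s : Finset ℕ) :
    ‖∏ i ∈ s, (1 - x ^ (k + i + 1))‖ ≤ Real.exp (1 - ‖x‖)⁻¹ := by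
  have hx₀ : 0 ≤ ‖x‖ := norm_nonneg x
  calc ‖∏ i ∈ s, (1 - x ^ (k + i + 1))‖
      ≤ ∏ i ∈ s, (1 + ‖x‖ ^ i) := by
        refine (Finset.norm_prod_le _ _).trans (Finset.prod_le_prod (fun _ _ ↦ norm_nonneg _)
          fun i _ ↦ (norm_sub_le _ _).trans ?_)
        rw [norm_one]
        grw [norm_pow_le, pow_le_pow_of_le_one hx₀ hx.le (by omega : i ≤ k + i + 1)]
    _ ≤ Real.exp (∑ i ∈ s, ‖x‖ ^ i) := Real.prod_one_add_le_exp_sum s fun i ↦ by positivity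
    _ ≤ Real.exp (1 - ‖x‖)⁻¹ := by
        rw [← tsum_geometric_of_lt_one hx₀ hx]
        gcongr
        exact (summable_geometric_of_lt_one hx₀ hx).sum_le_tsum s fun i _ ↦ by positivity

theorem norm_pow_mul_prod_one_sub_pow_le (hx : ‖x‖ < 1) (k n : ℕ) :
    ‖x ^ ((k + 1) * n) * ∏ i ∈ Finset.range (n + 1), (1 - x ^ (k + i + 1))‖ ≤
      Real.exp (1 - ‖x‖)⁻¹ * ‖x‖ ^ n := by
  grw [norm_mul_le, norm_pow_le, norm_prod_one_sub_pow_le_exp hx, mul_comm,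
    pow_le_pow_of_le_one (norm_nonneg x) hx.le (Nat.le_mul_of_pos_left n k.succ_pos)]

theorem summable_pow_mul_prod_one_sub_pow_of_norm_lt_one [CompleteSpace R] (hx : ‖x‖ < 1)
    (k : ℕ) :
    Summable fun n ↦ x ^ ((k + 1) * n) * ∏ i ∈ Finset.range (n + 1), (1 - x ^ (k + i + 1)) :=
  .of_norm_bounded ((summable_geometric_of_lt_one (norm_nonneg x) hx).mul_left _)
    (norm_pow_mul_prod_one_sub_pow_le hx k)

theorem norm_tsum_pow_mul_prod_one_sub_pow_le (hx : ‖x‖ < 1) (k : ℕ) :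
    ‖∑' n, x ^ ((k + 1) * n) * ∏ i ∈ Finset.range (n + 1), (1 - x ^ (k + i + 1))‖ ≤
      Real.exp (1 - ‖x‖)⁻¹ * (1 - ‖x‖)⁻¹ :=
  tsum_of_norm_bounded ((hasSum_geometric_of_lt_one (norm_nonneg x) hx).mul_left _)
    (norm_pow_mul_prod_one_sub_pow_le hx k)

theorem multipliable_one_sub_pow_add_of_norm_lt_one [CompleteSpace R] (hx : ‖x‖ < 1) (k : ℕ) :
    Multipliable fun n ↦ 1 - x ^ (n + k + 1) := by
  simp_rw [sub_eq_add_neg]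
  refine multipliable_one_add_of_summable <|
    (summable_geometric_of_lt_one (norm_nonneg x) hx).of_nonneg_of_le (fun _ ↦ norm_nonneg _)
      fun n ↦ ?_
  grw [norm_neg, norm_pow_le]
  exact pow_le_pow_of_le_one (norm_nonneg x) hx.le (by omega)

theorem tendsto_pentagonal_remainder_nhds_zero (hx : ‖x‖ < 1) :
    Tendsto (fun k ↦ (-1) ^ (k + 1) * x ^ ((k + 1) * (3 * k + 4) / 2) *
      ∑' n, x ^ ((k + 1) * n) * ∏ i ∈ Finset.range (n + 1), (1 - x ^ (k + i + 1)))
      atTop (𝓝 0) := by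
  set C := Real.exp (1 - ‖x‖)⁻¹ * (1 - ‖x‖)⁻¹
  refine squeeze_zero_norm (a := fun k ↦ ‖x‖ ^ k * C) (fun k ↦ ?_) <| by
    simpa using (tendsto_pow_atTop_nhds_zero_of_lt_one (norm_nonneg x) hx).mul_const C
  have hexp : k ≤ (k + 1) * (3 * k + 4) / 2 := (Nat.le_div_iff_mul_le two_pos).2 (by nlinarith)
  grw [norm_mul_le, norm_mul_le, norm_pow_le, norm_neg, norm_one, one_pow, one_mul,
    norm_pow_le, norm_tsum_pow_mul_prod_one_sub_pow_le hx,
    pow_le_pow_of_le_one (norm_nonneg x) hx.le hexp]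
  exact mul_nonneg (Real.exp_nonneg _) (inv_nonneg.2 (sub_nonneg.2 hx.le))

end NormedRing

theorem summable_pow_pentagonal {r : ℝ} (hr₀ : 0 ≤ r) (hr : r < 1) :
    Summable fun n : ℤ ↦ r ^ pentagonal n :=
  (summable_geometric_of_lt_one hr₀ hr).comp_injective pentagonal_injective

theorem hasSum_neg_one_zpow_mul_pow_pentagonal {𝕜 : Type*} [NormedField 𝕜] [CompleteSpace 𝕜]
    {x : 𝕜} (hx : ‖x‖ < 1) :
    HasSum (fun n : ℤ ↦ (-1) ^ n * x ^ pentagonal n) (∏' m, (1 - x ^ (m + 1))) := by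
  have hsummable : Summable fun n : ℤ ↦ (-1) ^ n * x ^ pentagonal n :=
    .of_norm <| (summable_pow_pentagonal (norm_nonneg x) hx).congr fun n ↦ by simp
  have hsign (k : ℕ) : (-1 : 𝕜) ^ (-(k : ℤ)) = (-1) ^ k := by
    rw [zpow_neg, zpow_natCast, ← inv_pow, inv_neg, inv_one]
  have hpaired : HasSum (fun k : ℕ ↦ (-1) ^ k * (x ^ pentagonal (-k) - x ^ pentagonal (k + 1)))
      (∑' n : ℤ, (-1) ^ n * x ^ pentagonal n) := by
    -- reflecting `ℤ` turns the library's pairing of `n` with `-(n + 1)` into that of `-k` with `k + 1`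
    convert ((Equiv.neg ℤ).hasSum_iff.2 hsummable.hasSum).nat_add_neg_add_one using 2 with k
    simp only [Function.comp_apply, Equiv.neg_apply, neg_neg, hsign,
      zpow_add_one₀ (by norm_num : (-1 : 𝕜) ≠ 0), zpow_natCast]
    ring
  rw [Pentagonal.tprod_one_sub_pow (tendsto_pow_atTop_nhds_zero_of_norm_lt_one hx)
    (summable_pow_mul_prod_one_sub_pow_of_norm_lt_one hx)
    (multipliable_one_sub_pow_add_of_norm_lt_one hx) hpaired.summable
    (tendsto_pentagonal_remainder_nhds_zero hx), hpaired.tsum_eq]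
  exact hsummable.hasSum

/-- Euler's pentagonal number theorem: for `‖x‖ < 1`, the infinite product
`∏_{m=1}^∞ (1 - x^m)` converges and equals the absolutely convergent series
`∑_{n ∈ ℤ} (-1)^n x^{n(3n-1)/2}`. -/
theorem euler_pentagonal_number_theorem (x : ℂ) (hx : ‖x‖ < 1) :
    Multipliable (fun m : ℕ => 1 - x ^ (m + 1)) ∧
    Summable (fun n : ℤ => ‖(-1 : ℂ) ^ n * x ^ (n * (3 * n - 1) / 2).toNat‖) ∧
    ∏' m : ℕ, (1 - x ^ (m + 1)) =
      ∑' n : ℤ, (-1 : ℂ) ^ n * x ^ (n * (3 * n - 1) / 2).toNat :=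
  ⟨by simpa using multipliable_one_sub_pow_add_of_norm_lt_one hx 0,
    (summable_pow_pentagonal (norm_nonneg x) hx).congr fun n ↦ by simp [pentagonal],
    (hasSum_neg_one_zpow_mul_pow_pentagonal hx).tsum_eq.symm⟩
end

section
/- For every positive integer N, the number of partitions of N into an even number of distinct parts minus the number of partitions of N into an odd number of distinct parts equals (−1)^k if N = k(3k−1)/2 or N = k(3k+1)/2 for some positive integer k, and equals 0 otherwise (Franklin's combinatorial form of the pentagonal number theorem). -/
namespace Franklin

open Finset

noncomputable def pmax (S : Finset ℕ) : ℕ := sSup (S : Set ℕ)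
noncomputable def pmin (S : Finset ℕ) : ℕ := sInf (S : Set ℕ)
noncomputable def sig (S : Finset ℕ) : ℕ := sInf {j | 0 < j ∧ pmax S - j ∉ S}

variable {S : Finset ℕ} {x a : ℕ}

lemma pmax_mem (h : S.Nonempty) : pmax S ∈ S := by
  have := Nat.sSup_mem (s := (S : Set ℕ)) (by exact_mod_cast h.to_set) S.finite_toSet.bddAbove
  exact_mod_cast this

lemma le_pmax (hx : x ∈ S) : x ≤ pmax S :=
  le_csSup S.finite_toSet.bddAbove (by exact_mod_cast hx)

lemma pmin_mem (h : S.Nonempty) : pmin S ∈ S := by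
  have := Nat.sInf_mem (s := (S : Set ℕ)) (by exact_mod_cast h.to_set)
  exact_mod_cast this

lemma pmin_le (hx : x ∈ S) : pmin S ≤ x := Nat.sInf_le (by exact_mod_cast hx)

lemma pmax_eq (h1 : a ∈ S) (h2 : ∀ x ∈ S, x ≤ a) : pmax S = a :=
  le_antisymm (h2 _ (pmax_mem ⟨a, h1⟩)) (le_pmax h1)

lemma pmin_eq (h1 : a ∈ S) (h2 : ∀ x ∈ S, a ≤ x) : pmin S = a :=
  le_antisymm (pmin_le h1) (h2 _ (pmin_mem ⟨a, h1⟩))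

lemma sig_set_mem (h0 : ∀ x ∈ S, 0 < x) (hne : S.Nonempty) : sig S ∈ {j | 0 < j ∧ pmax S - j ∉ S} := by
  apply Nat.sInf_mem
  exact ⟨pmax S, h0 _ (pmax_mem hne), by simp; intro h; exact absurd (h0 _ h) (by simp)⟩

lemma sig_pos (h0 : ∀ x ∈ S, 0 < x) (hne : S.Nonempty) : 0 < sig S := (sig_set_mem h0 hne).1

lemma sig_notMem (h0 : ∀ x ∈ S, 0 < x) (hne : S.Nonempty) : pmax S - sig S ∉ S := (sig_set_mem h0 hne).2

lemma sig_lt (h0 : ∀ x ∈ S, 0 < x) (hne : S.Nonempty) (j : ℕ) (hj0 : 0 < j) (hj : j < sig S) : pmax S - j ∈ S := by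
  by_contra h
  have : sig S ≤ j := Nat.sInf_le ⟨hj0, h⟩
  omega

lemma sig_le_pmax (h0 : ∀ x ∈ S, 0 < x) (hne : S.Nonempty) : sig S ≤ pmax S :=
  Nat.sInf_le ⟨h0 _ (pmax_mem hne), by simp; intro h; exact absurd (h0 _ h) (by simp)⟩

lemma sig_eq (h0 : ∀ x ∈ S, 0 < x) (hne : S.Nonempty) (h1 : 0 < a) (h2 : pmax S - a ∉ S) (h3 : ∀ j, 0 < j → j < a → pmax S - j ∈ S) :
    sig S = a := by
  refine le_antisymm (Nat.sInf_le ⟨h1, h2⟩) ?_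
  by_contra h
  exact (sig_set_mem h0 hne).2 (h3 _ (sig_pos h0 hne) (by omega))

lemma mem_of_stair (h0 : ∀ x ∈ S, 0 < x) (hne : S.Nonempty) (hx1 : pmax S - sig S < x) (hx2 : x ≤ pmax S) : x ∈ S := by
  rcases eq_or_lt_of_le hx2 with rfl | hlt
  · exact pmax_mem hne
  · have hσ := sig_le_pmax h0 hne
    have : pmax S - (pmax S - x) = x := by omega
    rw [← this]
    exact sig_lt h0 hne _ (by omega) (by omega)

noncomputable def franklin (S : Finset ℕ) : Finset ℕ :=
  if pmin S ≤ sig S then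
    insert (pmax S + 1) ((S.erase (pmin S)).erase (pmax S - pmin S + 1))
  else
    insert (sig S) (insert (pmax S - sig S) (S.erase (pmax S)))

def exc (S : Finset ℕ) : Prop :=
  (pmin S ≤ sig S ∧ pmax S + 1 = 2 * pmin S) ∨ (sig S < pmin S ∧ pmax S = 2 * sig S)

lemma caseA (h0 : ∀ x ∈ S, 0 < x) (hne : S.Nonempty)
    (hle : pmin S ≤ sig S) (hm2 : pmax S + 1 ≠ 2 * pmin S) :
    (∀ x ∈ franklin S, 0 < x) ∧ (franklin S).sum id = S.sum id ∧
      (franklin S).card + 1 = S.card ∧ ¬ exc (franklin S) ∧ franklin (franklin S) = S := by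
  set m := pmax S with hmdef
  set s := pmin S with hsdef
  set σ := sig S with hσdef
  have hmS : m ∈ S := pmax_mem hne
  have hsS : s ∈ S := pmin_mem hne
  have hmpos : 0 < m := h0 _ hmS
  have hspos : 0 < s := h0 _ hsS
  have hσm : σ ≤ m := sig_le_pmax h0 hne
  have hsm : s ≤ m := pmin_le hmS
  have hσnot : m - σ ∉ S := sig_notMem h0 hne
  have hstep : m - s + 1 ∈ S := by
    rcases Nat.eq_or_lt_of_le hspos with h1 | h1
    · have : m - s + 1 = m := by omega
      rw [this]; exact hmS
    · have : m - s + 1 = m - (s - 1) := by omega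
      rw [this]; exact sig_lt h0 hne (s - 1) (by omega) (by omega)
  have hms : 2 * s ≤ m := by
    have := pmin_le hstep
    omega
  -- description of T
  have hT : franklin S = insert (m + 1) ((S.erase s).erase (m - s + 1)) := by
    rw [franklin, if_pos hle]
  have hTmem : ∀ x, x ∈ franklin S ↔ x = m + 1 ∨ (x ∈ S ∧ x ≠ s ∧ x ≠ m - s + 1) := by
    intro x
    rw [hT]
    simp only [mem_insert, mem_erase]
    tauto
  have hmem1 : m + 1 ∈ franklin S := (hTmem _).2 (Or.inl rfl)
  have h0T : ∀ x ∈ franklin S, 0 < x := by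
    intro x hx
    rcases (hTmem x).1 hx with rfl | ⟨hx, _⟩
    · omega
    · exact h0 _ hx
  have hne' : (franklin S).Nonempty := ⟨m + 1, hmem1⟩
  have hnotin : (m : ℕ) + 1 ∉ (S.erase s).erase (m - s + 1) := by
    intro h
    have := le_pmax (mem_of_mem_erase (mem_of_mem_erase h))
    omega
  have hstep' : m - s + 1 ∈ S.erase s := mem_erase.2 ⟨by omega, hstep⟩
  have hsum : (franklin S).sum id = S.sum id := by
    rw [hT, sum_insert hnotin]
    have e1 := Finset.sum_erase_add (S.erase s) id hstep'
    have e2 := Finset.sum_erase_add S id hsS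
    simp only [id] at *
    omega
  have hcard : (franklin S).card + 1 = S.card := by
    rw [hT, card_insert_of_notMem hnotin, card_erase_of_mem hstep',
      card_erase_of_mem hsS]
    have : 2 ≤ S.card := Finset.one_lt_card.2 ⟨m, hmS, s, hsS, by omega⟩
    omega
  have hpmaxT : pmax (franklin S) = m + 1 := by
    apply pmax_eq hmem1
    intro x hx
    rcases (hTmem x).1 hx with rfl | ⟨hx, _⟩
    · exact le_rfl
    · have := le_pmax hx; omega
  have hpminT : s < pmin (franklin S) := by
    have h1 := pmin_mem hne'
    rcases (hTmem _).1 h1 with h2 | ⟨h2, h3, _⟩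
    · omega
    · have := pmin_le h2
      omega
  have hsigT : sig (franklin S) = s := by
    apply sig_eq h0T hne' hspos
    · rw [hpmaxT]
      intro h
      rcases (hTmem _).1 h with h2 | ⟨_, _, h4⟩ <;> omega
    · intro j hj0 hjs
      rw [hpmaxT]
      apply (hTmem _).2
      right
      refine ⟨?_, by omega, by omega⟩
      rcases Nat.eq_or_lt_of_le hj0 with h1 | h1
      · have : m + 1 - j = m := by omega
        rw [this]; exact hmS
      · have : m + 1 - j = m - (j - 1) := by omega
        rw [this]
        exact sig_lt h0 hne (j - 1) (by omega) (by omega)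
  have hcond : ¬ pmin (franklin S) ≤ sig (franklin S) := by
    rw [hsigT]; omega
  refine ⟨h0T, hsum, hcard, ?_, ?_⟩
  · intro hexcT
    rcases hexcT with ⟨h1, _⟩ | ⟨_, h2⟩
    · exact hcond h1
    · rw [hpmaxT, hsigT] at h2
      omega
  · rw [franklin, if_neg hcond, hpmaxT, hsigT]
    have e1 : m + 1 - s = m - s + 1 := by omega
    rw [e1, hT, Finset.erase_insert hnotin, Finset.insert_erase hstep',
      Finset.insert_erase hsS]
lemma caseB (h0 : ∀ x ∈ S, 0 < x) (hne : S.Nonempty)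
    (hlt : sig S < pmin S) (hm2 : pmax S ≠ 2 * sig S) :
    (∀ x ∈ franklin S, 0 < x) ∧ (franklin S).sum id = S.sum id ∧
      S.card + 1 = (franklin S).card ∧ ¬ exc (franklin S) ∧ franklin (franklin S) = S := by
  set m := pmax S with hmdef
  set s := pmin S with hsdef
  set σ := sig S with hσdef
  have hmS : m ∈ S := pmax_mem hne
  have hsS : s ∈ S := pmin_mem hne
  have hmpos : 0 < m := h0 _ hmS
  have hspos : 0 < s := h0 _ hsS
  have hσpos : 0 < σ := sig_pos h0 hne
  have hσm : σ ≤ m := sig_le_pmax h0 hne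
  have hsm : s ≤ m := pmin_le hmS
  have hσnot : m - σ ∉ S := sig_notMem h0 hne
  have hσS : σ ∉ S := fun h => by have := pmin_le h; omega
  have hms : 2 * σ ≤ m := by
    rcases Nat.eq_or_lt_of_le hσpos with h1 | h1
    · omega
    · have h2 : m - (σ - 1) ∈ S := sig_lt h0 hne (σ - 1) (by omega) (by omega)
      have := pmin_le h2
      omega
  have hms' : 2 * σ < m := by omega
  have hT : franklin S = insert σ (insert (m - σ) (S.erase m)) := by
    rw [franklin, if_neg (by omega)]
  have hTmem : ∀ x, x ∈ franklin S ↔ x = σ ∨ x = m - σ ∨ (x ∈ S ∧ x ≠ m) := by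
    intro x
    rw [hT]
    simp only [mem_insert, mem_erase]
    tauto
  have h0T : ∀ x ∈ franklin S, 0 < x := by
    intro x hx
    rcases (hTmem x).1 hx with rfl | rfl | ⟨hx, _⟩
    · omega
    · omega
    · exact h0 _ hx
  have hne' : (franklin S).Nonempty := ⟨σ, (hTmem _).2 (Or.inl rfl)⟩
  have hn1 : σ ∉ insert (m - σ) (S.erase m) := by
    simp only [mem_insert, mem_erase]
    push_neg
    exact ⟨by omega, fun _ => hσS⟩
  have hn2 : m - σ ∉ S.erase m := fun h => hσnot (mem_of_mem_erase h)
  have hsum : (franklin S).sum id = S.sum id := by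
    rw [hT, sum_insert hn1, sum_insert hn2]
    have e2 := Finset.sum_erase_add S id hmS
    simp only [id] at *
    omega
  have hcard : S.card + 1 = (franklin S).card := by
    rw [hT, card_insert_of_notMem hn1, card_insert_of_notMem hn2,
      card_erase_of_mem hmS]
    have : 0 < S.card := card_pos.2 hne
    omega
  have hm1T : m - 1 ∈ franklin S := by
    apply (hTmem _).2
    rcases Nat.eq_or_lt_of_le hσpos with h1 | h1
    · right; left; omega
    · right; right
      have h2 : m - 1 ∈ S := sig_lt h0 hne 1 (by omega) (by omega)
      exact ⟨h2, by omega⟩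
  have hpmaxT : pmax (franklin S) = m - 1 := by
    apply pmax_eq hm1T
    intro x hx
    rcases (hTmem x).1 hx with rfl | rfl | ⟨hx, hx2⟩
    · omega
    · omega
    · have := le_pmax hx; omega
  have hpminT : pmin (franklin S) = σ := by
    apply pmin_eq ((hTmem _).2 (Or.inl rfl))
    intro x hx
    rcases (hTmem x).1 hx with rfl | rfl | ⟨hx, _⟩
    · omega
    · omega
    · have := pmin_le hx; omega
  have hstairT : ∀ j, 0 < j → j < σ → m - 1 - j ∈ franklin S := by
    intro j hj0 hjσ
    apply (hTmem _).2
    rcases Nat.eq_or_lt_of_le (show j + 1 ≤ σ by omega) with h1 | h1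
    · right; left; omega
    · right; right
      have h2 : m - (j + 1) ∈ S := sig_lt h0 hne (j + 1) (by omega) (by omega)
      have e : m - 1 - j = m - (j + 1) := by omega
      rw [e]
      exact ⟨h2, by omega⟩
  have hsigT : σ ≤ sig (franklin S) := by
    by_contra h
    have h1 := sig_notMem h0T hne'
    rw [hpmaxT] at h1
    exact h1 (hstairT _ (sig_pos h0T hne') (by omega))
  have hcond : pmin (franklin S) ≤ sig (franklin S) := by rw [hpminT]; exact hsigT
  refine ⟨h0T, hsum, hcard, ?_, ?_⟩
  · intro hexcT
    rcases hexcT with ⟨_, h1⟩ | ⟨h2, _⟩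
    · rw [hpmaxT, hpminT] at h1
      omega
    · omega
  · rw [franklin, if_pos hcond, hpmaxT, hpminT]
    have e1 : m - 1 + 1 = m := by omega
    have e2 : m - 1 - σ + 1 = m - σ := by omega
    rw [e1, e2, hT, Finset.erase_insert hn1, Finset.erase_insert hn2,
      Finset.insert_erase hmS]
lemma franklin_spec (h0 : ∀ x ∈ S, 0 < x) (hne : S.Nonempty) (hx : ¬ exc S) :
    (∀ x ∈ franklin S, 0 < x) ∧ (franklin S).sum id = S.sum id ∧
      ((franklin S).card + 1 = S.card ∨ S.card + 1 = (franklin S).card) ∧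
      ¬ exc (franklin S) ∧ franklin (franklin S) = S := by
  rw [exc] at hx
  push_neg at hx
  rcases le_or_gt (pmin S) (sig S) with h | h
  · obtain ⟨a, b, c, d, e⟩ := caseA h0 hne h (hx.1 h)
    exact ⟨a, b, Or.inl c, d, e⟩
  · obtain ⟨a, b, c, d, e⟩ := caseB h0 hne h (hx.2 h)
    exact ⟨a, b, Or.inr c, d, e⟩

lemma exc_char (h0 : ∀ x ∈ S, 0 < x) (hne : S.Nonempty) (hexc : exc S) :
    ∃ k, 0 < k ∧ (S = Finset.Icc k (2 * k - 1) ∨ S = Finset.Icc (k + 1) (2 * k)) := by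
  have hmS : pmax S ∈ S := pmax_mem hne
  have hsS : pmin S ∈ S := pmin_mem hne
  have hspos : 0 < pmin S := h0 _ hsS
  have hσm : sig S ≤ pmax S := sig_le_pmax h0 hne
  have hσpos : 0 < sig S := sig_pos h0 hne
  rcases hexc with ⟨h1, h2⟩ | ⟨h1, h2⟩
  · refine ⟨pmin S, hspos, Or.inl ?_⟩
    ext x
    simp only [Finset.mem_Icc]
    constructor
    · intro hx
      have := pmin_le hx
      have := le_pmax hx
      omega
    · intro hx
      exact mem_of_stair h0 hne (by omega) (by omega)
  · refine ⟨sig S, hσpos, Or.inr ?_⟩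
    ext x
    simp only [Finset.mem_Icc]
    constructor
    · intro hx
      have := pmin_le hx
      have := le_pmax hx
      omega
    · intro hx
      exact mem_of_stair h0 hne (by omega) (by omega)

lemma exc_stair1 {k : ℕ} (hk : 0 < k) : exc (Finset.Icc k (2 * k - 1)) := by
  set S := Finset.Icc k (2 * k - 1) with hS
  have hmem : ∀ x, x ∈ S ↔ k ≤ x ∧ x ≤ 2 * k - 1 := by
    intro x; rw [hS, Finset.mem_Icc]
  have hne : S.Nonempty := ⟨k, (hmem k).2 (by omega)⟩
  have h0 : ∀ x ∈ S, 0 < x := fun x hx => by have := (hmem x).1 hx; omega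
  have hpmax : pmax S = 2 * k - 1 := pmax_eq ((hmem _).2 (by omega))
    (fun x hx => ((hmem x).1 hx).2)
  have hpmin : pmin S = k := pmin_eq ((hmem _).2 (by omega))
    (fun x hx => ((hmem x).1 hx).1)
  have hsig : sig S = k := by
    apply sig_eq h0 hne hk
    · rw [hpmax]
      intro h
      have := (hmem _).1 h
      omega
    · intro j hj0 hjk
      rw [hpmax]
      exact (hmem _).2 (by omega)
  left
  rw [hpmax, hpmin, hsig]
  omega

lemma exc_stair2 {k : ℕ} (hk : 0 < k) : exc (Finset.Icc (k + 1) (2 * k)) := by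
  set S := Finset.Icc (k + 1) (2 * k) with hS
  have hmem : ∀ x, x ∈ S ↔ k + 1 ≤ x ∧ x ≤ 2 * k := by
    intro x; rw [hS, Finset.mem_Icc]
  have hne : S.Nonempty := ⟨k + 1, (hmem _).2 (by omega)⟩
  have h0 : ∀ x ∈ S, 0 < x := fun x hx => by have := (hmem x).1 hx; omega
  have hpmax : pmax S = 2 * k := pmax_eq ((hmem _).2 (by omega))
    (fun x hx => ((hmem x).1 hx).2)
  have hpmin : pmin S = k + 1 := pmin_eq ((hmem _).2 (by omega))
    (fun x hx => ((hmem x).1 hx).1)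
  have hsig : sig S = k := by
    apply sig_eq h0 hne hk
    · rw [hpmax]
      intro h
      have := (hmem _).1 h
      omega
    · intro j hj0 hjk
      rw [hpmax]
      exact (hmem _).2 (by omega)
  right
  rw [hpmax, hpmin, hsig]
  omega

lemma sum_Icc_id (a c : ℕ) : 2 * (Finset.Icc a (a + c)).sum id = (2 * a + c) * (c + 1) := by
  induction c with
  | zero => simp [Finset.Icc_self]
  | succ c ih =>
    have h1 : Finset.Icc a (a + (c + 1)) = insert (a + c + 1) (Finset.Icc a (a + c)) := by
      ext x
      simp only [Finset.mem_Icc, Finset.mem_insert]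
      omega
    rw [h1, Finset.sum_insert (by simp), Nat.mul_add, ih]
    simp only [id]
    ring
open scoped Classical in
noncomputable def D (N : ℕ) : Finset (Finset ℕ) :=
  ((Finset.range (N + 1)).powerset).filter (fun S => (∀ x ∈ S, 0 < x) ∧ S.sum id = N)

lemma mem_D {N : ℕ} {S : Finset ℕ} :
    S ∈ D N ↔ (∀ x ∈ S, 0 < x) ∧ S.sum id = N := by
  classical
  rw [D]
  simp only [Finset.mem_filter, Finset.mem_powerset]
  constructor
  · tauto
  · intro h
    refine ⟨fun x hx => ?_, h⟩
    have : x ≤ S.sum id := Finset.single_le_sum (f := id) (fun i _ => Nat.zero_le i) hx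
    rw [Finset.mem_range]
    omega

lemma nonempty_of_mem_D {N : ℕ} {S : Finset ℕ} (hN : 0 < N) (hS : S ∈ D N) :
    S.Nonempty := by
  rcases S.eq_empty_or_nonempty with rfl | h
  · have := (mem_D.1 hS).2
    simp at this
    omega
  · exact h

open scoped Classical in
lemma D_sum_eq_exc (N : ℕ) (hN : 0 < N) :
    ∑ S ∈ D N, ((-1 : ℤ) ^ S.card) = ∑ S ∈ (D N).filter exc, ((-1 : ℤ) ^ S.card) := by
  rw [← Finset.sum_filter_add_sum_filter_not (D N) exc]
  have h0 : ∑ S ∈ (D N).filter (fun S => ¬ exc S), ((-1 : ℤ) ^ S.card) = 0 := by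
    apply Finset.sum_involution (fun S _ => franklin S)
    · intro S hS
      rw [Finset.mem_filter] at hS
      obtain ⟨hD, hexc⟩ := hS
      obtain ⟨hpos, hsum⟩ := mem_D.1 hD
      obtain ⟨_, _, hc, _, _⟩ := franklin_spec hpos (nonempty_of_mem_D hN hD) hexc
      rcases hc with h | h
      · rw [← h, pow_succ]; ring
      · rw [← h, pow_succ]; ring
    · intro S hS _
      rw [Finset.mem_filter] at hS
      obtain ⟨hD, hexc⟩ := hS
      obtain ⟨hpos, hsum⟩ := mem_D.1 hD
      obtain ⟨_, _, hc, _, _⟩ := franklin_spec hpos (nonempty_of_mem_D hN hD) hexc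
      intro heq
      rw [heq] at hc
      omega
    · intro S hS
      rw [Finset.mem_filter] at hS ⊢
      obtain ⟨hD, hexc⟩ := hS
      obtain ⟨hpos, hsum⟩ := mem_D.1 hD
      obtain ⟨h1, h2, _, h4, _⟩ := franklin_spec hpos (nonempty_of_mem_D hN hD) hexc
      exact ⟨mem_D.2 ⟨h1, by rw [h2, hsum]⟩, h4⟩
    · intro S hS
      rw [Finset.mem_filter] at hS
      obtain ⟨hD, hexc⟩ := hS
      obtain ⟨hpos, hsum⟩ := mem_D.1 hD
      obtain ⟨_, _, _, _, h5⟩ := franklin_spec hpos (nonempty_of_mem_D hN hD) hexc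
      exact h5
  rw [h0, add_zero]
lemma pent1_even (k : ℕ) (hk : 0 < k) : 2 * (k * (3 * k - 1) / 2) = k * (3 * k - 1) := by
  have h : ∃ t, k * (3 * k - 1) = 2 * t := by
    rcases Nat.even_or_odd k with ⟨t, rfl⟩ | ⟨t, rfl⟩
    · exact ⟨t * (3 * (t + t) - 1), by ring⟩
    · have e : 3 * (2 * t + 1) - 1 = 6 * t + 2 := by omega
      rw [e]
      exact ⟨(2 * t + 1) * (3 * t + 1), by ring⟩
  obtain ⟨t, ht⟩ := h
  omega

lemma pent2_even (k : ℕ) : 2 * (k * (3 * k + 1) / 2) = k * (3 * k + 1) := by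
  have h : ∃ t, k * (3 * k + 1) = 2 * t := by
    rcases Nat.even_or_odd k with ⟨t, rfl⟩ | ⟨t, rfl⟩
    · exact ⟨t * (3 * (t + t) + 1), by ring⟩
    · exact ⟨(2 * t + 1) * (3 * t + 2), by ring_nf⟩
  obtain ⟨t, ht⟩ := h
  omega

lemma pent11 {j k : ℕ} (hj : 0 < j) (hk : 0 < k) (h : j * (3 * j - 1) = k * (3 * k - 1)) :
    j = k := by
  have hz : (j : ℤ) * (3 * j - 1) = (k : ℤ) * (3 * k - 1) := by
    have h1 : ((3 * j - 1 : ℕ) : ℤ) = 3 * (j : ℤ) - 1 := by push_cast [Nat.cast_sub]; omega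
    have h2 : ((3 * k - 1 : ℕ) : ℤ) = 3 * (k : ℤ) - 1 := by push_cast [Nat.cast_sub]; omega
    have := congrArg (Nat.cast : ℕ → ℤ) h
    push_cast at this
    rw [h1, h2] at this
    exact this
  have hfac : ((j : ℤ) - k) * (3 * ((j : ℤ) + k) - 1) = 0 := by linear_combination hz
  rcases mul_eq_zero.1 hfac with h1 | h1 <;> omega

lemma pent12 {j k : ℕ} (hj : 0 < j) (hk : 0 < k) (h : j * (3 * j + 1) = k * (3 * k - 1)) :
    False := by
  have hz : (j : ℤ) * (3 * j + 1) = (k : ℤ) * (3 * k - 1) := by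
    have h2 : ((3 * k - 1 : ℕ) : ℤ) = 3 * (k : ℤ) - 1 := by push_cast [Nat.cast_sub]; omega
    have := congrArg (Nat.cast : ℕ → ℤ) h
    push_cast at this
    rw [h2] at this
    exact this
  have hfac : (((j : ℤ) - k) * 3 + 1) * ((j : ℤ) + k) = 0 := by linear_combination hz
  rcases mul_eq_zero.1 hfac with h1 | h1 <;> omega

lemma pent22 {j k : ℕ} (h : j * (3 * j + 1) = k * (3 * k + 1)) : j = k := by
  have hz : (j : ℤ) * (3 * j + 1) = (k : ℤ) * (3 * k + 1) := by exact_mod_cast h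
  have hfac : ((j : ℤ) - k) * (3 * ((j : ℤ) + k) + 1) = 0 := by linear_combination hz
  rcases mul_eq_zero.1 hfac with h1 | h1 <;> omega

lemma sum_stair1 {k : ℕ} (hk : 0 < k) : 2 * (Finset.Icc k (2 * k - 1)).sum id = k * (3 * k - 1) := by
  have e : 2 * k - 1 = k + (k - 1) := by omega
  rw [e, sum_Icc_id]
  have e1 : 2 * k + (k - 1) = 3 * k - 1 := by omega
  have e2 : k - 1 + 1 = k := by omega
  rw [e1, e2, Nat.mul_comm]

lemma sum_stair2 {k : ℕ} (hk : 0 < k) : 2 * (Finset.Icc (k + 1) (2 * k)).sum id = k * (3 * k + 1) := by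
  have e : 2 * k = (k + 1) + (k - 1) := by omega
  rw [e, sum_Icc_id]
  have e1 : 2 * (k + 1) + (k - 1) = 3 * k + 1 := by omega
  have e2 : k - 1 + 1 = k := by omega
  rw [e1, e2, Nat.mul_comm]

lemma stair1_mem_D {N k : ℕ} (hk : 0 < k) (h : 2 * N = k * (3 * k - 1)) :
    Finset.Icc k (2 * k - 1) ∈ D N := by
  apply mem_D.2
  refine ⟨fun x hx => ?_, ?_⟩
  · rw [Finset.mem_Icc] at hx; omega
  · have := sum_stair1 hk
    omega

lemma stair2_mem_D {N k : ℕ} (hk : 0 < k) (h : 2 * N = k * (3 * k + 1)) :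
    Finset.Icc (k + 1) (2 * k) ∈ D N := by
  apply mem_D.2
  refine ⟨fun x hx => ?_, ?_⟩
  · rw [Finset.mem_Icc] at hx; omega
  · have := sum_stair2 hk
    omega

open scoped Classical in
lemma filter_exc_eq1 {N k : ℕ} (hk : 0 < k) (h : 2 * N = k * (3 * k - 1)) :
    (D N).filter exc = {Finset.Icc k (2 * k - 1)} := by
  have hN : 0 < N := by
    have h1 : 2 ≤ 3 * k - 1 := by omega
    have := Nat.mul_le_mul hk h1
    omega
  ext S
  rw [Finset.mem_filter, Finset.mem_singleton]
  constructor
  · rintro ⟨hD, hexc⟩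
    obtain ⟨hpos, hsum⟩ := mem_D.1 hD
    obtain ⟨j, hj, hcase⟩ := exc_char hpos (nonempty_of_mem_D hN hD) hexc
    rcases hcase with rfl | rfl
    · have h2 := sum_stair1 hj
      rw [hsum] at h2
      rw [pent11 hj hk (by omega)]
    · have h2 := sum_stair2 hj
      rw [hsum] at h2
      exact (pent12 hj hk (by omega)).elim
  · rintro rfl
    exact ⟨stair1_mem_D hk h, exc_stair1 hk⟩

open scoped Classical in
lemma filter_exc_eq2 {N k : ℕ} (hk : 0 < k) (h : 2 * N = k * (3 * k + 1)) :
    (D N).filter exc = {Finset.Icc (k + 1) (2 * k)} := by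
  have hN : 0 < N := by
    have h1 : 2 ≤ 3 * k + 1 := by omega
    have := Nat.mul_le_mul hk h1
    omega
  ext S
  rw [Finset.mem_filter, Finset.mem_singleton]
  constructor
  · rintro ⟨hD, hexc⟩
    obtain ⟨hpos, hsum⟩ := mem_D.1 hD
    obtain ⟨j, hj, hcase⟩ := exc_char hpos (nonempty_of_mem_D hN hD) hexc
    rcases hcase with rfl | rfl
    · have h2 := sum_stair1 hj
      rw [hsum] at h2
      exact (pent12 hk hj (by omega)).elim
    · have h2 := sum_stair2 hj
      rw [hsum] at h2
      rw [pent22 (j := j) (k := k) (by omega)]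
  · rintro rfl
    exact ⟨stair2_mem_D hk h, exc_stair2 hk⟩

open scoped Classical in
lemma filter_exc_eq0 {N : ℕ} (hN : 0 < N)
    (h : ¬ ∃ k : ℕ, 0 < k ∧ (N = k * (3 * k - 1) / 2 ∨ N = k * (3 * k + 1) / 2)) :
    (D N).filter exc = ∅ := by
  rw [Finset.eq_empty_iff_forall_notMem]
  intro S hS
  rw [Finset.mem_filter] at hS
  obtain ⟨hD, hexc⟩ := hS
  obtain ⟨hpos, hsum⟩ := mem_D.1 hD
  obtain ⟨j, hj, hcase⟩ := exc_char hpos (nonempty_of_mem_D hN hD) hexc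
  apply h
  refine ⟨j, hj, ?_⟩
  rcases hcase with rfl | rfl
  · left
    have h2 := sum_stair1 hj
    have h3 := pent1_even j hj
    omega
  · right
    have h2 := sum_stair2 hj
    have h3 := pent2_even j
    omega
open scoped Classical in
lemma D_sum_eval1 {N k : ℕ} (hk : 0 < k) (h : 2 * N = k * (3 * k - 1)) :
    ∑ S ∈ D N, ((-1 : ℤ) ^ S.card) = (-1) ^ k := by
  have hN : 0 < N := by
    have h1 : 2 ≤ 3 * k - 1 := by omega
    have := Nat.mul_le_mul hk h1
    omega
  rw [D_sum_eq_exc N hN, filter_exc_eq1 hk h, Finset.sum_singleton, Nat.card_Icc]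
  congr 1
  omega

open scoped Classical in
lemma D_sum_eval2 {N k : ℕ} (hk : 0 < k) (h : 2 * N = k * (3 * k + 1)) :
    ∑ S ∈ D N, ((-1 : ℤ) ^ S.card) = (-1) ^ k := by
  have hN : 0 < N := by
    have h1 : 2 ≤ 3 * k + 1 := by omega
    have := Nat.mul_le_mul hk h1
    omega
  rw [D_sum_eq_exc N hN, filter_exc_eq2 hk h, Finset.sum_singleton, Nat.card_Icc]
  congr 1
  omega

open scoped Classical in
lemma D_sum_eval0 {N : ℕ} (hN : 0 < N)
    (h : ¬ ∃ k : ℕ, 0 < k ∧ (N = k * (3 * k - 1) / 2 ∨ N = k * (3 * k + 1) / 2)) :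
    ∑ S ∈ D N, ((-1 : ℤ) ^ S.card) = 0 := by
  rw [D_sum_eq_exc N hN, filter_exc_eq0 hN h, Finset.sum_empty]

lemma signed_count {α : Type*} (F : Finset α) (c : α → ℕ)
    [DecidablePred fun p : α => Even (c p)] :
    ((F.filter fun p => Even (c p)).card : ℤ) - ((F.filter fun p => ¬ Even (c p)).card : ℤ)
      = ∑ p ∈ F, (-1 : ℤ) ^ (c p) := by
  rw [← Finset.sum_filter_add_sum_filter_not F (fun p => Even (c p)) (fun p => (-1 : ℤ) ^ (c p))]
  rw [Finset.sum_congr rfl (fun p hp => Even.neg_one_pow (Finset.mem_filter.1 hp).2),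
    Finset.sum_congr rfl
      (fun p hp => Odd.neg_one_pow (Nat.not_even_iff_odd.1 (Finset.mem_filter.1 hp).2))]
  simp only [Finset.sum_const, nsmul_eq_mul, mul_one, mul_neg_one]
  ring

lemma partition_sum (N : ℕ) :
    ∑ p ∈ Nat.Partition.distincts N, (-1 : ℤ) ^ (Multiset.card p.parts)
      = ∑ S ∈ D N, (-1 : ℤ) ^ S.card := by
  classical
  have hmem : ∀ p : Nat.Partition N, p ∈ Nat.Partition.distincts N ↔ p.parts.Nodup := by
    intro p
    rw [Nat.Partition.distincts, Finset.mem_filter]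
    simp
  apply Finset.sum_bij (i := fun p (_ : p ∈ Nat.Partition.distincts N) => p.parts.toFinset)
  · intro p hp
    have hnodup := (hmem p).1 hp
    have hval : p.parts.toFinset.val = p.parts := by
      rw [Multiset.toFinset_val]
      exact Multiset.dedup_eq_self.2 hnodup
    apply mem_D.2
    constructor
    · intro x hx
      exact p.parts_pos (Multiset.mem_toFinset.1 hx)
    · rw [Finset.sum, hval, Multiset.map_id]
      exact p.parts_sum
  · intro p hp q hq heq
    have hvp : p.parts.toFinset.val = p.parts := by
      rw [Multiset.toFinset_val]; exact Multiset.dedup_eq_self.2 ((hmem p).1 hp)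
    have hvq : q.parts.toFinset.val = q.parts := by
      rw [Multiset.toFinset_val]; exact Multiset.dedup_eq_self.2 ((hmem q).1 hq)
    apply Nat.Partition.ext
    rw [← hvp, ← hvq, heq]
  · intro S hS
    obtain ⟨hpos, hsum⟩ := mem_D.1 hS
    refine ⟨⟨S.val, fun {i} hi => hpos i hi, ?_⟩, ?_, ?_⟩
    · rw [← hsum, Finset.sum, Multiset.map_id]
    · rw [hmem]
      exact S.nodup
    · exact Finset.val_toFinset S
  · intro p hp
    congr 1
    rw [Finset.card_def]
    have hval : p.parts.toFinset.val = p.parts := by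
      rw [Multiset.toFinset_val]; exact Multiset.dedup_eq_self.2 ((hmem p).1 hp)
    rw [hval]

end Franklin


open Nat

/-- Franklin's combinatorial form of the pentagonal number theorem: for `N ≥ 1`,
the number of partitions of `N` into an even number of distinct parts minus the
number of partitions into an odd number of distinct parts is `(-1)^k` when
`N = k(3k−1)/2` or `N = k(3k+1)/2` for some `k ≥ 1`, and is `0` otherwise. -/
theorem franklin_pentagonal_number_theorem (N : ℕ) (hN : 0 < N) :
    (∀ k : ℕ, 0 < k → (N = k * (3 * k - 1) / 2 ∨ N = k * (3 * k + 1) / 2) →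
      (((Nat.Partition.distincts N).filter
          (fun p => Even (Multiset.card p.parts))).card : ℤ) -
        (((Nat.Partition.distincts N).filter
          (fun p => ¬ Even (Multiset.card p.parts))).card : ℤ) = (-1) ^ k) ∧
    ((¬ ∃ k : ℕ, 0 < k ∧ (N = k * (3 * k - 1) / 2 ∨ N = k * (3 * k + 1) / 2)) →
      (((Nat.Partition.distincts N).filter
          (fun p => Even (Multiset.card p.parts))).card : ℤ) -
        (((Nat.Partition.distincts N).filter
          (fun p => ¬ Even (Multiset.card p.parts))).card : ℤ) = 0) := by
  have hbase := Franklin.signed_count (Nat.Partition.distincts N)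
    (fun p => Multiset.card p.parts)
  rw [Franklin.partition_sum N] at hbase
  constructor
  · intro k hk hcase
    rw [hbase]
    rcases hcase with h | h
    · have h2 : 2 * N = k * (3 * k - 1) := by
        rw [h]; exact Franklin.pent1_even k hk
      exact Franklin.D_sum_eval1 hk h2
    · have h2 : 2 * N = k * (3 * k + 1) := by
        rw [h]; exact Franklin.pent2_even k
      exact Franklin.D_sum_eval2 hk h2
  · intro h
    rw [hbase]
    exact Franklin.D_sum_eval0 hN h
end

section
/- Let p : ℤ → ℤ be defined by p(n) = the number of partitions of n for n ≥ 0 and p(n) = 0 for n < 0. Then for every integer n ≥ 1, ∑_{j ∈ ℤ} (−1)^j p(n − j(3j−1)/2) = 0; equivalently, p(n) = ∑_{j ∈ ℤ, j ≠ 0} (−1)^{j+1} p(n − j(3j−1)/2) (Euler's pentagonal-number recurrence for the partition function). -/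
/-!
Multiplying Euler's pentagonal number theorem `∏ (1 - Xⁱ⁺¹) = ∑ₖ (-1)ᵏ X^(k(3k-1)/2)`
(`PowerSeries.WithPiTopology.hasProd_one_sub_X_pow`) by the product formula
`∑ p(n) Xⁿ = ∏ 1 / (1 - Xⁱ⁺¹)` gives `(∑ₖ (-1)ᵏ X^(k(3k-1)/2)) * ∑ p(n) Xⁿ = 1`; the coefficient
of `Xⁿ` for `n ≥ 1` is the recurrence. Since `k ↦ k(3k-1)/2` is injective, the sum over `k ∈ ℤ`
is the same as the sum over the exponents.
-/

open PowerSeries PowerSeries.WithPiTopology Finset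

theorem HasSum.subtype_ne {α β : Type*} [AddCommGroup α] [TopologicalSpace α]
    [IsTopologicalAddGroup α] [DecidableEq β] {f : β → α} {a : α} (hf : HasSum f a) (b : β) :
    HasSum (fun x : {x // x ≠ b} ↦ f x) (a - f b) := by
  have h := hf.update b 0
  rw [zero_sub, neg_add_eq_sub,
    ← (Subtype.val_injective (p := (· ≠ b))).hasSum_iff fun x hx ↦ ?_] at h
  · convert h using 2 with x
    exact (Function.update_of_ne x.2 _ _).symm
  · simp_all

namespace Nat.Partition

variable (R : Type*) [CommSemiring R] [TopologicalSpace R] [T2Space R] [IsTopologicalSemiring R]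

theorem hasProd_powerSeriesMk_card :
    HasProd (fun i ↦ ∑' j : ℕ, X ^ ((i + 1) * j))
      (PowerSeries.mk fun n ↦ (Fintype.card n.Partition : R)) := by
  simpa [restricted] using hasProd_powerSeriesMk_card_restricted R (fun _ ↦ True)

end Nat.Partition

namespace PowerSeries

variable {R : Type*} [CommRing R]

theorem pentagonalSeries_mul_powerSeriesMk_card_partition :
    pentagonalSeries R * PowerSeries.mk (fun n ↦ (Fintype.card n.Partition : R)) = 1 := by
  -- The identity is algebraic; any topology on `R` serves to state the infinite products.
  let _ : TopologicalSpace R := ⊥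
  have _ : DiscreteTopology R := ⟨rfl⟩
  have h := (hasProd_one_sub_X_pow R).mul (Nat.Partition.hasProd_powerSeriesMk_card R)
  have geom (i : ℕ) : (1 - X ^ (i + 1)) * ∑' j : ℕ, (X : R⟦X⟧) ^ ((i + 1) * j) = 1 := by
    simp_rw [pow_mul]
    exact one_sub_mul_tsum_pow_of_constantCoeff_eq_zero (by simp)
  simp only [geom] at h
  exact h.unique hasProd_one

theorem sum_coeff_pentagonalSeries_mul_card_partition_sub {n : ℕ} (hn : n ≠ 0) :
    ∑ k ∈ range (n + 1), (pentagonalSeries R).coeff k * (Fintype.card (n - k).Partition : R) =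
      0 := by
  have h := congrArg (coeff n) (pentagonalSeries_mul_powerSeriesMk_card_partition (R := R))
  rw [coeff_mul, Nat.sum_antidiagonal_eq_sum_range_succ
    (fun i j ↦ coeff i (pentagonalSeries R) * coeff j (mk _))] at h
  simpa only [coeff_mk, coeff_one, if_neg hn] using h

variable [TopologicalSpace R]

theorem hasSum_negOnePow_mul_comp_pentagonal_iff {f : ℕ → R} {a : R} :
    HasSum (fun k : ℤ ↦ (k.negOnePow : R) * f (pentagonal k)) a ↔
      HasSum (fun n ↦ (pentagonalSeries R).coeff n * f n) a := by
  rw [← pentagonal_injective.hasSum_iff fun n hn ↦ by simp [coeff_pentagonalSeries_eq_zero R hn]]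
  simp [Function.comp_def]

end PowerSeries

theorem hasSum_negOnePow_mul_sub_pentagonal {R : Type*} [CommRing R] [TopologicalSpace R]
    (p : ℤ → R) (hp : ∀ n : ℕ, p n = Fintype.card (Nat.Partition n))
    (hneg : ∀ n : ℤ, n < 0 → p n = 0) {n : ℕ} (hn : n ≠ 0) :
    HasSum (fun k : ℤ ↦ (k.negOnePow : R) * p (n - pentagonal k)) 0 := by
  rw [PowerSeries.hasSum_negOnePow_mul_comp_pentagonal_iff (f := fun k ↦ p (n - k))]
  have hvanish : ∀ k ∉ range (n + 1), (pentagonalSeries R).coeff k * p (n - k) = 0 := by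
    intro k hk
    rw [mem_range, not_lt] at hk
    rw [hneg _ (by omega), mul_zero]
  have hsum : ∑ k ∈ range (n + 1), (pentagonalSeries R).coeff k * p (n - k) = 0 := by
    rw [← PowerSeries.sum_coeff_pentagonalSeries_mul_card_partition_sub hn]
    refine sum_congr rfl fun k hk ↦ ?_
    rw [← hp, Nat.cast_sub (Nat.le_of_lt_succ (mem_range.mp hk))]
  simpa only [hsum] using hasSum_sum_of_ne_finset_zero hvanish

/-- Euler's pentagonal-number recurrence for the partition function:
if `p : ℤ → ℤ` equals the partition counting function on nonnegative integers
and vanishes on negative integers, then for every `n ≥ 1` the alternating sum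
`∑_{j ∈ ℤ} (-1)^j p(n - j(3j-1)/2)` vanishes; equivalently
`p(n) = ∑_{j ≠ 0} (-1)^{j+1} p(n - j(3j-1)/2)`. -/
theorem euler_partition_recurrence (p : ℤ → ℤ)
    (hp : ∀ n : ℕ, p n = Fintype.card (Nat.Partition n))
    (hneg : ∀ n : ℤ, n < 0 → p n = 0) :
    ∀ n : ℤ, 1 ≤ n →
      (∑' j : ℤ, (j.negOnePow : ℤ) * p (n - j * (3 * j - 1) / 2) = 0) ∧
      p n = ∑' j : {j : ℤ // j ≠ 0},
        (((j : ℤ) + 1).negOnePow : ℤ) * p (n - (j : ℤ) * (3 * (j : ℤ) - 1) / 2) := by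
  intro n hn
  lift n to ℕ using by omega
  have hsum := hasSum_negOnePow_mul_sub_pentagonal p hp hneg (n := n) (by omega)
  simp only [natCast_pentagonal, Int.cast_id] at hsum
  refine ⟨hsum.tsum_eq, ?_⟩
  have hnonzero := (hsum.subtype_ne 0).neg
  simp only [Int.negOnePow_zero, Units.val_one, one_mul, zero_mul, Int.zero_ediv, sub_zero,
    zero_sub, neg_neg] at hnonzero
  simp only [Int.negOnePow_succ, Units.val_neg, neg_mul, hnonzero.tsum_eq]
end

section
/- Let σ(n) denote the sum of all positive divisors of n. Then for every integer n ≥ 1, σ(n) = ∑_{j ∈ ℤ, j ≠ 0, j(3j−1)/2 ≤ n} (−1)^{j+1} c_j, where c_j = n when j(3j−1)/2 = n and c_j = σ(n − j(3j−1)/2) when j(3j−1)/2 < n (Euler's pentagonal-number recurrence for the sum-of-divisors function). -/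
open ArithmeticFunction
open scoped ArithmeticFunction.sigma

namespace EulerPentAux

open Polynomial Finset

/-- `pA m = 3m(m-1)/2`. -/
def pA : ℕ → ℕ
  | 0 => 0
  | m + 1 => pA m + 3 * m

lemma pA_succ (m : ℕ) : pA (m + 1) = pA m + 3 * m := rfl

lemma two_pA (m : ℕ) : 2 * pA m + 3 * m = 3 * m * m := by
  induction m with
  | zero => simp [pA]
  | succ m ih => rw [pA_succ]; ring_nf; ring_nf at ih; omega

/-- term of the Euler sum -/
noncomputable def f (m k : ℕ) : ℤ[X] :=
  X ^ (pA m + m * k) * ∏ i ∈ Finset.Ico m (m + k - 1), (1 - X ^ i)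

/-- Euler's remainder sums, truncated at `n+2` terms -/
noncomputable def S (n m : ℕ) : ℤ[X] := ∑ k ∈ Finset.Icc 1 (n + 2), f m k

/-- main telescoping identity, Euler's pentagonal step (exact form) -/
lemma keyC (m L : ℕ) :
    (∑ k ∈ Finset.Icc 1 (L + 2), f m k) + ∑ j ∈ Finset.Icc 1 L, f (m + 1) j
      = X ^ (pA m + m) + X ^ (pA m + 2 * m)
        - X ^ (pA m + m * (L + 3)) * ∏ i ∈ Finset.Ico (m + 1) (m + L + 1), (1 - X ^ i) := by
  induction L with
  | zero =>
    rw [show (0:ℕ)+2 = 1+1 from rfl, Finset.sum_Icc_succ_top (by omega), Finset.sum_Icc_succ_top (by omega)]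
    simp only [Finset.Icc_self, Finset.sum_singleton, Finset.Icc_eq_empty_of_lt (by omega : (1:ℕ) > 0), Finset.sum_empty]
    simp only [f, show m + 1 - 1 = m from rfl, show m + 2 - 1 = m + 1 from by omega,
      Finset.Ico_self, Finset.prod_empty, Nat.Ico_succ_singleton, Finset.prod_singleton,
      show m + 0 + 1 = m + 1 from by omega]
    ring
  | succ L ih =>
    rw [show L+1+2 = (L+2)+1 from by omega]
    rw [Finset.sum_Icc_succ_top (by omega) (f m)]
    rw [Finset.sum_Icc_succ_top (by omega) (f (m+1))]
    have e1 : m + (L + 2 + 1) - 1 = m + L + 2 := by omega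
    have e2 : (m + 1) + (L + 1) - 1 = m + L + 1 := by omega
    simp only [f, e1, e2, pA_succ]
    rw [Finset.prod_eq_prod_Ico_succ_bot (by omega : m < m + L + 2),
        Finset.prod_Ico_succ_top (by omega : m + 1 ≤ m + L + 1),
        show m + (L + 1) + 1 = m + L + 2 from by omega]
    have hsplit : (∏ k ∈ Finset.Ico (m+1) (m+L+2), (1 - X^k) : ℤ[X])
        = (∏ k ∈ Finset.Ico (m+1) (m+L+1), (1 - X^k)) * (1 - X^(m+L+1)) := by
      rw [← Finset.prod_Ico_succ_top (by omega : m + 1 ≤ m + L + 1)]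
    rw [hsplit]
    simp only [f, pA_succ] at ih
    linear_combination ih

lemma X_pow_dvd_f (n m k : ℕ) (h : n + 1 ≤ pA m + m * k) : (X : ℤ[X]) ^ (n + 1) ∣ f m k := by
  exact Dvd.dvd.mul_right (pow_dvd_pow X h) _

lemma step (n m : ℕ) (hm : 1 ≤ m) :
    (X : ℤ[X]) ^ (n + 1) ∣
      S n m + S n (m + 1) - X ^ (pA m + m) - X ^ (pA m + 2 * m) := by
  have hk := keyC m n
  have h1 : S n (m+1) = (∑ j ∈ Finset.Icc 1 n, f (m+1) j) + f (m+1) (n+1) + f (m+1) (n+2) := by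
    unfold S
    rw [show n+2 = (n+1)+1 from by omega]
    rw [Finset.sum_Icc_succ_top (by omega) (f (m+1))]
    rw [Finset.sum_Icc_succ_top (by omega) (f (m+1))]
  have e : S n m + S n (m + 1) - X ^ (pA m + m) - X ^ (pA m + 2 * m)
      = f (m+1) (n+1) + f (m+1) (n+2)
        - X ^ (pA m + m * (n + 3)) * ∏ i ∈ Finset.Ico (m + 1) (m + n + 1), (1 - X ^ i) := by
    rw [h1]; unfold S; linear_combination hk
  rw [e]
  have hmul : ∀ k : ℕ, 1 ≤ k → n + 1 ≤ (m+1) * k → n + 1 ≤ pA (m+1) + (m+1) * k := by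
    intro k h1 h2; omega
  have hb : n + 1 ≤ m * (n + 3) := le_trans (by omega) (Nat.le_mul_of_pos_left (n+3) hm)
  apply dvd_sub
  · exact dvd_add
      (X_pow_dvd_f n (m+1) (n+1) (hmul _ (by omega)
        (le_trans (by omega) (Nat.le_mul_of_pos_left (n+1) (by omega)))))
      (X_pow_dvd_f n (m+1) (n+2) (hmul _ (by omega)
        (le_trans (by omega) (Nat.le_mul_of_pos_left (n+2) (by omega)))))
  · exact Dvd.dvd.mul_right (pow_dvd_pow X (by omega)) _

lemma telescope (n M : ℕ) :
    (X : ℤ[X]) ^ (n + 1) ∣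
      S n 1 + (∑ m ∈ Finset.Icc 1 M, (-1 : ℤ[X]) ^ m * (X ^ (pA m + m) + X ^ (pA m + 2 * m)))
        - (-1 : ℤ[X]) ^ M * S n (M + 1) := by
  induction M with
  | zero => simp
  | succ M ih =>
    have h2 : S n 1 + (∑ m ∈ Finset.Icc 1 (M+1), (-1 : ℤ[X]) ^ m * (X ^ (pA m + m) + X ^ (pA m + 2 * m)))
        - (-1 : ℤ[X]) ^ (M+1) * S n (M + 2)
        = (S n 1 + (∑ m ∈ Finset.Icc 1 M, (-1 : ℤ[X]) ^ m * (X ^ (pA m + m) + X ^ (pA m + 2 * m)))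
            - (-1 : ℤ[X]) ^ M * S n (M + 1))
          + (-1 : ℤ[X]) ^ M *
            (S n (M+1) + S n (M+1+1) - X ^ (pA (M+1) + (M+1)) - X ^ (pA (M+1) + 2 * (M+1))) := by
      rw [Finset.sum_Icc_succ_top (by omega)]
      ring
    rw [h2]
    exact dvd_add ih (Dvd.dvd.mul_left (step n (M+1) (by omega)) _)

/-- the truncated pentagonal polynomial -/
noncomputable def Pent (n : ℕ) : ℤ[X] :=
  1 + ∑ m ∈ Finset.Icc 1 n, C ((-1 : ℤ) ^ m) * (X ^ (pA m + m) + X ^ (pA m + 2 * m))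

lemma prod_eq_one_sub_S (n : ℕ) :
    (∏ k ∈ Finset.Icc 1 (n + 2), (1 - X ^ k) : ℤ[X]) = 1 - S n 1 := by
  unfold S
  generalize n + 2 = K
  induction K with
  | zero => simp
  | succ K ih =>
    rw [Finset.prod_Icc_succ_top (by omega), Finset.sum_Icc_succ_top (by omega) (f 1), ih]
    have hf : f 1 (K+1) = X ^ (K+1) * ∏ i ∈ Finset.Icc 1 K, (1 - X^i) := by
      rw [show f 1 (K+1) = X ^ (pA 1 + 1*(K+1)) * ∏ i ∈ Finset.Ico 1 (1+(K+1)-1), (1 - X^i) from rfl,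
        show (1:ℕ) + (K+1) - 1 = K + 1 from by omega, Finset.Ico_add_one_right_eq_Icc,
        show pA 1 + 1 * (K+1) = K + 1 from by simp [pA]]
    rw [hf, ih]
    ring

/-- Part A: the truncated pentagonal number theorem. -/
lemma partA (n : ℕ) :
    (X : ℤ[X]) ^ (n + 1) ∣ (∏ k ∈ Finset.Icc 1 (n + 2), (1 - X ^ k)) - Pent n := by
  have hS : (X : ℤ[X]) ^ (n + 1) ∣ S n (n + 1) := by
    apply Finset.dvd_sum
    intro k hk
    apply X_pow_dvd_f
    have hk1 : 1 ≤ k := (Finset.mem_Icc.mp hk).1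
    have : n + 1 ≤ (n + 1) * k := Nat.le_mul_of_pos_right (n+1) (by omega)
    omega
  rw [prod_eq_one_sub_S]
  have h2 : (1 : ℤ[X]) - S n 1 - Pent n
      = -(S n 1 + (∑ m ∈ Finset.Icc 1 n, (-1 : ℤ[X]) ^ m * (X ^ (pA m + m) + X ^ (pA m + 2 * m)))
            - (-1 : ℤ[X]) ^ n * S n (n + 1))
        - (-1 : ℤ[X]) ^ n * S n (n + 1) := by
    unfold Pent
    simp only [map_pow, map_neg, map_one]
    ring
  rw [h2]
  exact dvd_sub (dvd_neg.mpr (telescope n n)) (Dvd.dvd.mul_left hS _)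

/-- the sigma generating polynomial -/
noncomputable def G (n : ℕ) : ℤ[X] :=
  ∑ k ∈ Finset.Icc 1 (n + 2), (C (k : ℤ)) * X ^ (k - 1) * ∑ j ∈ Finset.range (n + 1), X ^ (j * k)

/-- Part B: logarithmic derivative identity. -/
lemma partB (n : ℕ) :
    (X : ℤ[X]) ^ (n + 1) ∣
      derivative (∏ k ∈ Finset.Icc 1 (n + 2), (1 - X ^ k))
        + G n * ∏ k ∈ Finset.Icc 1 (n + 2), (1 - X ^ k) := by
  set s := Finset.Icc 1 (n + 2) with hs
  set P : ℤ[X] := ∏ k ∈ s, (1 - X ^ k) with hP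
  have hgeo : ∀ k ∈ s, ((1:ℤ[X]) - X ^ k) * (∑ j ∈ Finset.range (n + 1), X ^ (j * k))
      = 1 - X ^ ((n + 1) * k) := by
    intro k hk
    have hsum : (∑ j ∈ Finset.range (n + 1), (X:ℤ[X]) ^ (j * k))
        = ∑ j ∈ Finset.range (n + 1), ((X:ℤ[X]) ^ k) ^ j :=
      Finset.sum_congr rfl (fun j _ => by rw [← pow_mul, Nat.mul_comm])
    have h := geom_sum_mul ((X:ℤ[X]) ^ k) (n + 1)
    rw [hsum, show (n+1) * k = k * (n+1) from Nat.mul_comm _ _, pow_mul]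
    linear_combination -h
  have hkey : ∀ k ∈ s, (∏ x ∈ s.erase k, ((1:ℤ[X]) - X ^ x))
      = (∑ j ∈ Finset.range (n + 1), X ^ (j * k)) * P
        + X ^ ((n + 1) * k) * ∏ x ∈ s.erase k, ((1:ℤ[X]) - X ^ x) := by
    intro k hk
    have hp : (∏ x ∈ s.erase k, ((1:ℤ[X]) - X ^ x)) * (1 - X ^ k) = P :=
      Finset.prod_erase_mul _ _ hk
    have h1 : ((1:ℤ[X]) - X ^ k) * (∑ j ∈ Finset.range (n + 1), X ^ (j * k))
        + X ^ ((n + 1) * k) = 1 := by rw [hgeo k hk]; ring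
    calc (∏ x ∈ s.erase k, ((1:ℤ[X]) - X ^ x))
        = (∏ x ∈ s.erase k, ((1:ℤ[X]) - X ^ x)) *
            (((1:ℤ[X]) - X ^ k) * (∑ j ∈ Finset.range (n + 1), X ^ (j * k)) + X ^ ((n + 1) * k)) := by
          rw [h1, mul_one]
      _ = _ := by rw [← hp]; ring
  have hd : derivative P = ∑ k ∈ s, (∏ x ∈ s.erase k, ((1:ℤ[X]) - X ^ x)) * (-(C (k:ℤ) * X ^ (k - 1))) := by
    have h0 : derivative P = ∑ k ∈ s, (∏ x ∈ s.erase k, ((1:ℤ[X]) - X ^ x)) * derivative (1 - X ^ k) :=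
      Polynomial.derivative_prod
    rw [h0]
    exact Finset.sum_congr rfl (fun k _ => by simp [Polynomial.derivative_X_pow])
  have hG : G n * P = ∑ k ∈ s, (C (k:ℤ) * X ^ (k - 1) * ∑ j ∈ Finset.range (n + 1), X ^ (j * k)) * P := by
    rw [G, Finset.sum_mul]
  rw [hd, hG, ← Finset.sum_add_distrib]
  apply Finset.dvd_sum
  intro k hk
  have e : (∏ x ∈ s.erase k, ((1:ℤ[X]) - X ^ x)) * (-(C (k:ℤ) * X ^ (k - 1)))
      + (C (k:ℤ) * X ^ (k - 1) * ∑ j ∈ Finset.range (n + 1), X ^ (j * k)) * P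
      = -(X ^ ((n + 1) * k) * (C (k:ℤ) * X ^ (k - 1) * ∏ x ∈ s.erase k, ((1:ℤ[X]) - X ^ x))) := by
    linear_combination (-(C (k:ℤ) * X ^ (k - 1))) * hkey k hk
  rw [e, dvd_neg]
  have hk1 : 1 ≤ k := (Finset.mem_Icc.mp hk).1
  exact Dvd.dvd.mul_right (pow_dvd_pow X (Nat.le_mul_of_pos_right (n+1) (by omega))) _

/-- pentagonal coefficient function -/
def pcf (n v : ℕ) : ℤ :=
  (if v = 0 then 1 else 0)
    + ∑ m ∈ Finset.Icc 1 n,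
        (-1 : ℤ) ^ m * ((if v = pA m + m then 1 else 0) + (if v = pA m + 2 * m then 1 else 0))

lemma coeff_Pent (n v : ℕ) : (Pent n).coeff v = pcf n v := by
  unfold Pent pcf
  rw [Polynomial.coeff_add, Polynomial.coeff_one, Polynomial.finset_sum_coeff]
  congr 1
  refine Finset.sum_congr rfl (fun m _ => ?_)
  rw [Polynomial.coeff_C_mul, Polynomial.coeff_add, Polynomial.coeff_X_pow, Polynomial.coeff_X_pow]

lemma coeff_G (n u : ℕ) (hu : u ≤ n) : (G n).coeff u = (σ 1 (u + 1) : ℤ) := by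
  unfold G
  rw [Polynomial.finset_sum_coeff]
  have h1 : ∀ k ∈ Finset.Icc 1 (n + 2),
      ((C (k : ℤ)) * X ^ (k - 1) * ∑ j ∈ Finset.range (n + 1), X ^ (j * k)).coeff u
        = ∑ j ∈ Finset.range (n + 1), (if u = (k - 1) + j * k then (k : ℤ) else 0) := by
    intro k hk
    rw [mul_assoc, Finset.mul_sum, Finset.mul_sum, Polynomial.finset_sum_coeff]
    refine Finset.sum_congr rfl (fun j _ => ?_)
    rw [← pow_add, Polynomial.coeff_C_mul, Polynomial.coeff_X_pow, mul_ite, mul_one, mul_zero]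
  rw [Finset.sum_congr rfl h1, ← Finset.sum_product']
  rw [← Finset.sum_filter (fun p : ℕ × ℕ => u = (p.1 - 1) + p.2 * p.1) (fun p => (p.1 : ℤ))]
  have h2 : ∑ q ∈ (u + 1).divisorsAntidiagonal, (q.1 : ℤ) = (σ 1 (u + 1) : ℤ) := by
    rw [Nat.sum_divisorsAntidiagonal (fun a b => (a : ℤ)), ArithmeticFunction.sigma_one_apply]
    push_cast
    rfl
  rw [← h2]
  refine Finset.sum_nbij' (fun p => (p.1, p.2 + 1)) (fun q => (q.1, q.2 - 1)) ?_ ?_ ?_ ?_ ?_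
  · rintro ⟨k, j⟩ hm
    simp only [Finset.mem_filter, Finset.mem_product, Finset.mem_Icc, Finset.mem_range] at hm
    obtain ⟨⟨⟨hk1, hk2⟩, hj⟩, hcond⟩ := hm
    rw [Nat.mem_divisorsAntidiagonal]
    constructor
    · have : k * (j + 1) = k * j + k := by ring
      rw [this]
      have : j * k = k * j := Nat.mul_comm _ _
      omega
    · omega
  · rintro ⟨a, b⟩ hm
    rw [Nat.mem_divisorsAntidiagonal] at hm
    obtain ⟨hab, hne⟩ := hm
    have hab2 : a * b = u + 1 := hab
    have ha : 1 ≤ a := by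
      rcases Nat.eq_zero_or_pos a with h | h
      · rw [h, Nat.zero_mul] at hab2; omega
      · exact h
    have hb : 1 ≤ b := by
      rcases Nat.eq_zero_or_pos b with h | h
      · rw [h, Nat.mul_zero] at hab2; omega
      · exact h
    obtain ⟨b', rfl⟩ : ∃ b', b = b' + 1 := ⟨b - 1, by omega⟩
    have hab' : a * b' + a = u + 1 := by rw [Nat.mul_succ] at hab2; exact hab2
    have hmul : b' * a = a * b' := Nat.mul_comm _ _
    have hb'le : b' ≤ a * b' := Nat.le_mul_of_pos_left b' ha
    dsimp only
    simp only [Finset.mem_filter, Finset.mem_product, Finset.mem_Icc, Finset.mem_range,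
      Nat.add_sub_cancel]
    refine ⟨⟨⟨ha, by omega⟩, by omega⟩, by omega⟩
  · rintro ⟨k, j⟩ _; simp
  · rintro ⟨a, b⟩ hm
    rw [Nat.mem_divisorsAntidiagonal] at hm
    obtain ⟨hab, hne⟩ := hm
    have hab2 : a * b = u + 1 := hab
    have hb : 1 ≤ b := by
      rcases Nat.eq_zero_or_pos b with h | h
      · rw [h, Nat.mul_zero] at hab2; omega
      · exact h
    dsimp only
    rw [Nat.sub_add_cancel hb]
  · rintro ⟨k, j⟩ _; rfl

lemma coeff_of_dvd {p : ℤ[X]} {n d : ℕ} (h : (X : ℤ[X]) ^ (n + 1) ∣ p) (hd : d ≤ n) :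
    p.coeff d = 0 := by
  obtain ⟨r, rfl⟩ := h
  rw [mul_comm, Polynomial.coeff_mul_X_pow']
  simp [Nat.lt_succ_iff.mpr hd, not_le_of_gt (Nat.lt_succ_iff.mpr hd)]

/-- the master recurrence in terms of pentagonal coefficients -/
lemma master (n : ℕ) (hn : 1 ≤ n) :
    (n : ℤ) * pcf n n + ∑ v ∈ Finset.range n, (σ 1 (n - v) : ℤ) * pcf n v = 0 := by
  set P : ℤ[X] := ∏ k ∈ Finset.Icc 1 (n + 2), (1 - X ^ k) with hP
  have hcoeffP : ∀ d ≤ n, P.coeff d = pcf n d := by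
    intro d hd
    have h0 : (P - Pent n).coeff d = 0 := coeff_of_dvd (partA n) hd
    rw [Polynomial.coeff_sub, sub_eq_zero] at h0
    rw [h0, coeff_Pent]
  have hmain : (derivative P + G n * P).coeff (n - 1) = 0 :=
    coeff_of_dvd (partB n) (by omega)
  rw [Polynomial.coeff_add, Polynomial.coeff_derivative, Polynomial.coeff_mul] at hmain
  rw [show n - 1 + 1 = n from by omega] at hmain
  rw [Finset.Nat.sum_antidiagonal_eq_sum_range_succ_mk, show (n-1).succ = n from by omega] at hmain
  have hG' : ∀ k ∈ Finset.range n, (G n).coeff k * P.coeff (n - 1 - k)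
      = (σ 1 (k + 1) : ℤ) * pcf n (n - 1 - k) := by
    intro k hk
    rw [Finset.mem_range] at hk
    rw [coeff_G n k (by omega), hcoeffP (n - 1 - k) (by omega)]
  rw [Finset.sum_congr rfl hG'] at hmain
  have hsum : ∑ v ∈ Finset.range n, (σ 1 (n - v) : ℤ) * pcf n v
      = ∑ k ∈ Finset.range n, (σ 1 (k + 1) : ℤ) * pcf n (n - 1 - k) := by
    rw [← Finset.sum_range_reflect]
    refine Finset.sum_congr rfl (fun j hj => ?_)
    rw [Finset.mem_range] at hj
    rw [show n - (n - 1 - j) = j + 1 from by omega]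
  have hc : ((n - 1 : ℕ) : ℤ) + 1 = (n : ℤ) := by omega
  rw [hc, hcoeffP n (le_refl n)] at hmain
  rw [hsum]
  linear_combination hmain

end EulerPentAux

open EulerPentAux in
/-- Euler's pentagonal-number recurrence for the sum-of-divisors function:
for `n ≥ 1`, `σ(n) = ∑_{j ≠ 0, j(3j-1)/2 ≤ n} (-1)^{j+1} c_j`, where `c_j = n`
when `j(3j-1)/2 = n` and `c_j = σ(n - j(3j-1)/2)` when `j(3j-1)/2 < n`. -/
theorem euler_sigma_recurrence (n : ℕ) (hn : 1 ≤ n) :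
    (σ 1 n : ℤ) =
      ∑ j ∈ (Finset.Icc (-(n : ℤ)) (n : ℤ)).filter
          (fun j => j ≠ 0 ∧ j * (3 * j - 1) / 2 ≤ (n : ℤ)),
        ((j + 1).negOnePow : ℤ) *
          (if j * (3 * j - 1) / 2 = (n : ℤ) then (n : ℤ)
           else (σ 1 (n - (j * (3 * j - 1) / 2).toNat) : ℤ)) := by
  classical
  set t : ℕ → ℤ := fun e =>
    if e ≤ n then (if e = n then (n : ℤ) else (σ 1 (n - e) : ℤ)) else 0 with ht
  -- the single-exponent expansion
  have expand : ∀ e : ℕ,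
      (n : ℤ) * (if n = e then 1 else 0)
        + ∑ v ∈ Finset.range n, (σ 1 (n - v) : ℤ) * (if v = e then 1 else 0) = t e := by
    intro e
    have hs : ∑ v ∈ Finset.range n, (σ 1 (n - v) : ℤ) * (if v = e then 1 else 0)
        = if e ∈ Finset.range n then (σ 1 (n - e) : ℤ) else 0 := by
      rw [← Finset.sum_ite_eq' (Finset.range n) e (fun v => (σ 1 (n - v) : ℤ))]
      exact Finset.sum_congr rfl (fun v _ => by split_ifs <;> simp)
    rw [hs]
    simp only [ht, Finset.mem_range]
    by_cases h1 : e = n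
    · subst h1
      simp [show ¬ (e < e) from by omega]
    · by_cases h2 : e < n
      · simp [Ne.symm h1, h1, h2, le_of_lt h2]
      · simp [Ne.symm h1, h1, h2, show ¬ (e ≤ n) from by omega]
  -- master identity in t-form
  have key : (σ 1 n : ℤ)
      = ∑ m ∈ Finset.Icc 1 n, (-1 : ℤ) ^ (m + 1) * (t (pA m + m) + t (pA m + 2 * m)) := by
    have hm := master n hn
    have h1 : ∀ m ∈ Finset.Icc 1 n,
        (-1 : ℤ) ^ (m + 1) * (t (pA m + m) + t (pA m + 2 * m))
          = (-1 : ℤ) ^ (m + 1) *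
              (((n : ℤ) * (if n = pA m + m then 1 else 0)
                  + ∑ v ∈ Finset.range n, (σ 1 (n - v) : ℤ) * (if v = pA m + m then 1 else 0))
                + ((n : ℤ) * (if n = pA m + 2 * m then 1 else 0)
                  + ∑ v ∈ Finset.range n, (σ 1 (n - v) : ℤ) * (if v = pA m + 2 * m then 1 else 0))) := by
      intro m _
      rw [expand, expand]
    rw [Finset.sum_congr rfl h1]
    -- expand the master identity
    have hA : (n : ℤ) * pcf n n
        = (n : ℤ) * (if n = 0 then 1 else 0)
          + ∑ m ∈ Finset.Icc 1 n, ((-1 : ℤ) ^ m *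
              ((n : ℤ) * ((if n = pA m + m then 1 else 0) + (if n = pA m + 2 * m then 1 else 0)))) := by
      unfold pcf
      rw [mul_add, Finset.mul_sum]
      congr 1
      exact Finset.sum_congr rfl (fun m _ => by ring)
    have hB : ∑ v ∈ Finset.range n, (σ 1 (n - v) : ℤ) * pcf n v
        = (σ 1 n : ℤ)
          + ∑ m ∈ Finset.Icc 1 n, ((-1 : ℤ) ^ m *
              ∑ v ∈ Finset.range n, (σ 1 (n - v) : ℤ) *
                ((if v = pA m + m then 1 else 0) + (if v = pA m + 2 * m then 1 else 0))) := by
      have hb1 : ∀ v ∈ Finset.range n, (σ 1 (n - v) : ℤ) * pcf n v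
          = (σ 1 (n - v) : ℤ) * (if v = 0 then 1 else 0)
            + ∑ m ∈ Finset.Icc 1 n, ((-1 : ℤ) ^ m *
                ((σ 1 (n - v) : ℤ) * ((if v = pA m + m then 1 else 0) + (if v = pA m + 2 * m then 1 else 0)))) := by
        intro v _
        unfold pcf
        rw [mul_add, Finset.mul_sum]
        congr 1
        exact Finset.sum_congr rfl (fun m _ => by ring)
      rw [Finset.sum_congr rfl hb1, Finset.sum_add_distrib]
      congr 1
      · have : ∑ v ∈ Finset.range n, (σ 1 (n - v) : ℤ) * (if v = 0 then 1 else 0)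
            = if 0 ∈ Finset.range n then (σ 1 (n - 0) : ℤ) else 0 := by
          rw [← Finset.sum_ite_eq' (Finset.range n) 0 (fun v => (σ 1 (n - v) : ℤ))]
          exact Finset.sum_congr rfl (fun v _ => by split_ifs <;> simp)
        rw [this]
        simp [show (0 : ℕ) ∈ Finset.range n from Finset.mem_range.mpr (by omega)]
      · rw [Finset.sum_comm]
        exact Finset.sum_congr rfl (fun m _ => by rw [Finset.mul_sum])
    rw [hA, hB] at hm
    rw [show ((if n = 0 then (1:ℤ) else 0)) = 0 from by simp [show n ≠ 0 from by omega]] at hm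
    have hsplit : ∀ m ∈ Finset.Icc 1 n,
        (-1 : ℤ) ^ (m + 1) *
              (((n : ℤ) * (if n = pA m + m then 1 else 0)
                  + ∑ v ∈ Finset.range n, (σ 1 (n - v) : ℤ) * (if v = pA m + m then 1 else 0))
                + ((n : ℤ) * (if n = pA m + 2 * m then 1 else 0)
                  + ∑ v ∈ Finset.range n, (σ 1 (n - v) : ℤ) * (if v = pA m + 2 * m then 1 else 0)))
          = -(((-1 : ℤ) ^ m *
              ((n : ℤ) * ((if n = pA m + m then 1 else 0) + (if n = pA m + 2 * m then 1 else 0))))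
              + ((-1 : ℤ) ^ m *
              ∑ v ∈ Finset.range n, (σ 1 (n - v) : ℤ) *
                ((if v = pA m + m then 1 else 0) + (if v = pA m + 2 * m then 1 else 0)))) := by
      intro m _
      have e : ∑ v ∈ Finset.range n, (σ 1 (n - v) : ℤ) *
            ((if v = pA m + m then 1 else 0) + (if v = pA m + 2 * m then 1 else 0))
          = (∑ v ∈ Finset.range n, (σ 1 (n - v) : ℤ) * (if v = pA m + m then 1 else 0))
            + ∑ v ∈ Finset.range n, (σ 1 (n - v) : ℤ) * (if v = pA m + 2 * m then 1 else 0) := by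
        rw [← Finset.sum_add_distrib]
        exact Finset.sum_congr rfl (fun v _ => by ring)
      rw [e]
      ring
    rw [Finset.sum_congr rfl hsplit]
    rw [Finset.sum_neg_distrib, Finset.sum_add_distrib]
    linarith [hm]
  rw [key]
  -- helpers
  have hneg : ∀ k : ℕ, (((k : ℤ)).negOnePow : ℤ) = (-1 : ℤ) ^ k := by
    intro k
    induction k with
    | zero => simp
    | succ k ih =>
      rw [Nat.cast_succ, Int.negOnePow_succ, Units.val_neg, ih, pow_succ]
      ring
  have hcast : ∀ m : ℕ, (2 : ℤ) * (pA m : ℤ) + 3 * (m : ℤ) = 3 * (m : ℤ) * (m : ℤ) := by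
    intro m
    exact_mod_cast two_pA m
  have hg1 : ∀ m : ℕ, ((m : ℤ) * (3 * (m : ℤ) - 1)) / 2 = ((pA m + m : ℕ) : ℤ) := by
    intro m
    have h2 : (m : ℤ) * (3 * (m : ℤ) - 1) = 2 * ((pA m + m : ℕ) : ℤ) := by
      push_cast
      linear_combination (-1 : ℤ) * hcast m
    rw [h2, Int.mul_ediv_cancel_left _ two_ne_zero]
  have hg2 : ∀ m : ℕ, ((-(m : ℤ)) * (3 * (-(m : ℤ)) - 1)) / 2 = ((pA m + 2 * m : ℕ) : ℤ) := by
    intro m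
    have h2 : (-(m : ℤ)) * (3 * (-(m : ℤ)) - 1) = 2 * ((pA m + 2 * m : ℕ) : ℤ) := by
      push_cast
      linear_combination (-1 : ℤ) * hcast m
    rw [h2, Int.mul_ediv_cancel_left _ two_ne_zero]
  rw [Finset.sum_filter]
  -- split the interval
  have split1 : ∀ g : ℤ → ℤ, ∑ j ∈ Finset.Icc (-(n : ℤ)) (n : ℤ), g j
      = (∑ j ∈ Finset.Icc (-(n : ℤ)) (-1 : ℤ), g j) + ∑ j ∈ Finset.Icc (0 : ℤ) (n : ℤ), g j := by
    intro g
    rw [← Finset.sum_union]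
    · congr 1
      ext x
      simp only [Finset.mem_union, Finset.mem_Icc]
      omega
    · rw [Finset.disjoint_left]
      intro a ha hb
      simp only [Finset.mem_Icc] at ha hb
      omega
  have split2 : ∀ g : ℤ → ℤ, g 0 = 0 →
      ∑ j ∈ Finset.Icc (0 : ℤ) (n : ℤ), g j = ∑ j ∈ Finset.Icc (1 : ℤ) (n : ℤ), g j := by
    intro g hg
    rw [show Finset.Icc (0 : ℤ) (n : ℤ) = insert 0 (Finset.Icc 1 (n : ℤ)) from by
        ext x
        simp only [Finset.mem_insert, Finset.mem_Icc]
        omega]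
    rw [Finset.sum_insert (by simp only [Finset.mem_Icc]; omega), hg, zero_add]
  have reindex_neg : ∀ g : ℤ → ℤ, ∑ j ∈ Finset.Icc (-(n : ℤ)) (-1 : ℤ), g j
      = ∑ m ∈ Finset.Icc 1 n, g (-(m : ℤ)) := by
    intro g
    refine Finset.sum_nbij' (fun j => (-j).toNat) (fun m => -(m : ℤ)) ?_ ?_ ?_ ?_ ?_
    · intro a ha
      simp only [Finset.mem_Icc] at ha ⊢
      omega
    · intro a ha
      simp only [Finset.mem_Icc] at ha ⊢
      omega
    · intro a ha
      simp only [Finset.mem_Icc] at ha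
      omega
    · intro a ha
      simp only [Finset.mem_Icc] at ha
      omega
    · intro a ha
      simp only [Finset.mem_Icc] at ha
      have : (-(((-a).toNat : ℕ) : ℤ)) = a := by omega
      rw [this]
  have reindex_pos : ∀ g : ℤ → ℤ, ∑ j ∈ Finset.Icc (1 : ℤ) (n : ℤ), g j
      = ∑ m ∈ Finset.Icc 1 n, g (m : ℤ) := by
    intro g
    refine Finset.sum_nbij' (fun j => j.toNat) (fun m => (m : ℤ)) ?_ ?_ ?_ ?_ ?_
    · intro a ha
      simp only [Finset.mem_Icc] at ha ⊢
      omega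
    · intro a ha
      simp only [Finset.mem_Icc] at ha ⊢
      omega
    · intro a ha
      simp only [Finset.mem_Icc] at ha
      omega
    · intro a ha
      simp only [Finset.mem_Icc] at ha
      omega
    · intro a ha
      simp only [Finset.mem_Icc] at ha
      have : ((a.toNat : ℕ) : ℤ) = a := by omega
      rw [this]
  rw [split1, split2 _ (by norm_num), reindex_neg, reindex_pos, ← Finset.sum_add_distrib]
  refine Finset.sum_congr rfl ?_
  intro m hm
  rw [Finset.mem_Icc] at hm
  obtain ⟨hm1, hm2⟩ := hm
  -- evaluate negOnePow values
  have hnop1 : (((m : ℤ) + 1).negOnePow : ℤ) = (-1 : ℤ) ^ (m + 1) := by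
    rw [show ((m : ℤ) + 1) = (((m + 1 : ℕ)) : ℤ) from by push_cast; ring, hneg]
  have hnop2 : ((-(m : ℤ) + 1).negOnePow : ℤ) = (-1 : ℤ) ^ (m + 1) := by
    rw [show (-(m : ℤ) + 1) = -((m : ℤ) - 1) from by ring, Int.negOnePow_neg,
      show ((m : ℤ) - 1) = (((m - 1 : ℕ)) : ℤ) from by omega, hneg,
      show m + 1 = (m - 1) + 2 from by omega, pow_add]
    norm_num
  rw [hg1 m, hg2 m, hnop1, hnop2]
  simp only [ht, Nat.cast_le, Nat.cast_inj, Int.toNat_natCast,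
    show (m : ℤ) ≠ 0 from by omega, show -(m : ℤ) ≠ 0 from by omega,
    ne_eq, not_false_eq_true, true_and]
  split_ifs <;> ring
end

section
/- For every complex number x with |x| < 1, ∏_{m=1}^∞ (1 − x^m) = 1 − ∑_{k=1}^∞ x^k ∏_{m=1}^{k−1} (1 − x^m), where the product and series converge (Euler's Proposition II). -/
/-!
The partial products `P n = ∏_{m<n} (1 - a m)` satisfy `P (k + 1) = P k - a k * P k`, so the
partial sums of `∑ a k * P k` telescope to `1 - P n`. When `∑ ‖a m‖` converges, the partial
products are bounded by `exp (∑ ‖a m‖)`, which makes the series absolutely convergent; letting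
`n → ∞` gives the identity. Euler's case is `a m = x ^ (m + 1)`.
-/

open Finset

theorem Finset.sum_range_mul_prod_one_sub {R : Type*} [CommRing R] (a : ℕ → R) (n : ℕ) :
    ∑ k ∈ range n, a k * ∏ m ∈ range k, (1 - a m) = 1 - ∏ m ∈ range n, (1 - a m) := by
  induction n with
  | zero => simp
  | succ n ih => rw [sum_range_succ, prod_range_succ, ih]; ring

section NormedCommRing

variable {R : Type*} [NormedCommRing R] [NormOneClass R] {a : ℕ → R}

theorem norm_prod_range_one_sub_le (ha : Summable fun m ↦ ‖a m‖) (n : ℕ) :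
    ‖∏ m ∈ range n, (1 - a m)‖ ≤ Real.exp (∑' m, ‖a m‖) := by
  have hdev : ‖∏ m ∈ range n, (1 - a m) - 1‖ ≤ Real.exp (∑ m ∈ range n, ‖a m‖) - 1 := by
    simpa [sub_eq_add_neg] using (range n).norm_prod_one_add_sub_one_le (-a)
  have hpartial : ∑ m ∈ range n, ‖a m‖ ≤ ∑' m, ‖a m‖ :=
    ha.sum_le_tsum _ fun m _ ↦ norm_nonneg (a m)
  calc ‖∏ m ∈ range n, (1 - a m)‖
      ≤ ‖∏ m ∈ range n, (1 - a m) - 1‖ + ‖(1 : R)‖ := norm_le_norm_sub_add _ _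
    _ ≤ Real.exp (∑ m ∈ range n, ‖a m‖) := by rw [norm_one]; linarith
    _ ≤ Real.exp (∑' m, ‖a m‖) := Real.exp_le_exp.mpr hpartial

variable [CompleteSpace R]

theorem multipliable_one_sub_of_summable_norm (ha : Summable fun m ↦ ‖a m‖) :
    Multipliable fun m ↦ 1 - a m := by
  simpa [sub_eq_add_neg] using multipliable_one_add_of_summable (f := -a) (by simpa using ha)

theorem summable_mul_prod_range_one_sub (ha : Summable fun m ↦ ‖a m‖) :
    Summable fun k ↦ a k * ∏ m ∈ range k, (1 - a m) := by
  refine Summable.of_norm_bounded (ha.mul_right (Real.exp (∑' m, ‖a m‖))) fun k ↦ ?_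
  exact (norm_mul_le _ _).trans <|
    mul_le_mul_of_nonneg_left (norm_prod_range_one_sub_le ha k) (norm_nonneg _)

theorem tprod_one_sub_eq_one_sub_tsum (ha : Summable fun m ↦ ‖a m‖) :
    ∏' m, (1 - a m) = 1 - ∑' k, a k * ∏ m ∈ range k, (1 - a m) := by
  have hprod := (multipliable_one_sub_of_summable_norm ha).hasProd.tendsto_prod_nat
  have hsum := ((summable_mul_prod_range_one_sub ha).hasSum.tendsto_sum_nat).const_sub 1
  simp only [sum_range_mul_prod_one_sub, sub_sub_cancel] at hsum
  exact tendsto_nhds_unique hprod hsum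

end NormedCommRing

/-- Euler's Proposition II: for `‖x‖ < 1`,
`∏_{m=1}^∞ (1 - x^m) = 1 - ∑_{k=1}^∞ x^k ∏_{m=1}^{k-1} (1 - x^m)`,
where the infinite product and the series converge. -/
theorem euler_proposition_two (x : ℂ) (hx : ‖x‖ < 1) :
    Multipliable (fun m : ℕ => 1 - x ^ (m + 1)) ∧
    Summable (fun k : ℕ => x ^ (k + 1) * ∏ m ∈ Finset.range k, (1 - x ^ (m + 1))) ∧
    ∏' m : ℕ, (1 - x ^ (m + 1)) =
      1 - ∑' k : ℕ, x ^ (k + 1) * ∏ m ∈ Finset.range k, (1 - x ^ (m + 1)) := by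
  have hgeom : Summable fun m : ℕ ↦ ‖x ^ (m + 1)‖ := by
    simpa [norm_pow] using (summable_nat_add_iff 1).mpr
      (summable_geometric_of_lt_one (norm_nonneg x) hx)
  exact ⟨multipliable_one_sub_of_summable_norm hgeom, summable_mul_prod_range_one_sub hgeom,
    tprod_one_sub_eq_one_sub_tsum hgeom⟩
end

section
/- For every complex number x with |x| < 1, ∏_{m=1}^∞ (1 − x^m) = 1 + ∑_{n=1}^∞ (−1)^n x^{n(n+1)/2} / ∏_{j=1}^n (1 − x^j), where all products and the series converge (Euler's alternating q-series expansion of the infinite product). -/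
/-!
Expanding `(x;x)_N = ∏_{j<N} (1 - x^{j+1})` by the `q`-binomial theorem gives
`(x;x)_N = ∑_{k ≤ N} (-1)^k x^{k(k+1)/2} [N k]_x`. As `N → ∞` the Gaussian binomial coefficients
`[N k]_x = (x;x)_N / ((x;x)_k (x;x)_{N-k})` tend to `1 / (x;x)_k`, and they are bounded uniformly
in `N` and `k` because the partial products converge to a nonzero limit. Dominated convergence
for series (Tannery's theorem) then lets the expansion pass to the limit term by term.
-/

open Filter Finset Topology

lemma Nat.succ_choose_two (k : ℕ) : (k + 1).choose 2 = k.choose 2 + k := by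
  rw [Nat.choose_succ_succ', Nat.choose_one_right, add_comm]

section Algebra

variable {R : Type*} [CommRing R] (x : R)

/-- The Gaussian binomial coefficient `[N k]_x`, defined by the `q`-Pascal rule so that no
division is needed. -/
def gaussBinom : ℕ → ℕ → R
  | _, 0 => 1
  | 0, _ + 1 => 0
  | N + 1, k + 1 => gaussBinom N k + x ^ (k + 1) * gaussBinom N (k + 1)

/-- `qPochhammer x n` is `(x;x)_n = ∏_{j=1}^n (1 - x^j)`. -/
def qPochhammer (n : ℕ) : R := ∏ j ∈ range n, (1 - x ^ (j + 1))

@[simp] lemma gaussBinom_zero_right (N : ℕ) : gaussBinom x N 0 = 1 := by cases N <;> rfl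

lemma gaussBinom_succ_succ (N k : ℕ) :
    gaussBinom x (N + 1) (k + 1) = gaussBinom x N k + x ^ (k + 1) * gaussBinom x N (k + 1) :=
  rfl

lemma gaussBinom_eq_zero_of_lt {N k : ℕ} (h : N < k) : gaussBinom x N k = 0 := by
  induction N generalizing k with
  | zero => obtain ⟨k, rfl⟩ := Nat.exists_eq_add_one_of_ne_zero h.ne'; rfl
  | succ N ih =>
    obtain ⟨k, rfl⟩ := Nat.exists_eq_add_one_of_ne_zero (by omega : k ≠ 0)
    rw [gaussBinom_succ_succ, ih (by omega), ih (by omega), mul_zero, add_zero]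

@[simp] lemma gaussBinom_self (N : ℕ) : gaussBinom x N N = 1 := by
  induction N with
  | zero => rfl
  | succ N ih =>
    rw [gaussBinom_succ_succ, ih, gaussBinom_eq_zero_of_lt x N.lt_succ_self, mul_zero, add_zero]

@[simp] lemma qPochhammer_zero : qPochhammer x 0 = 1 := prod_range_zero _

lemma qPochhammer_succ (n : ℕ) : qPochhammer x (n + 1) = qPochhammer x n * (1 - x ^ (n + 1)) :=
  prod_range_succ _ _

/-- The `q`-binomial theorem. -/
theorem prod_one_add_mul_pow_eq_sum (z : R) (N : ℕ) :
    ∏ j ∈ range N, (1 + z * x ^ j) =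
      ∑ k ∈ range (N + 1), gaussBinom x N k * x ^ k.choose 2 * z ^ k := by
  induction N generalizing z with
  | zero => simp
  | succ N ih =>
    have hshift :
        ∏ j ∈ range N, (1 + z * x ^ (j + 1)) = ∏ j ∈ range N, (1 + z * x * x ^ j) := by
      simp only [pow_succ', mul_assoc]
    have hlow : ∑ k ∈ range (N + 1), gaussBinom x N k * x ^ (k + 1).choose 2 * z ^ k =
        1 + ∑ k ∈ range (N + 1), x ^ (k + 1) * gaussBinom x N (k + 1) * x ^ (k + 1).choose 2 *
          z ^ (k + 1) := by
      have hterm (k : ℕ) : gaussBinom x N (k + 1) * x ^ (k + 1 + 1).choose 2 * z ^ (k + 1) =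
          x ^ (k + 1) * gaussBinom x N (k + 1) * x ^ (k + 1).choose 2 * z ^ (k + 1) := by
        rw [Nat.succ_choose_two (k + 1)]; ring
      rw [sum_range_succ', sum_range_succ _ N, gaussBinom_eq_zero_of_lt x N.lt_succ_self]
      rw [sum_congr rfl fun k _ => hterm k]
      simp [add_comm]
    rw [prod_range_succ', hshift, ih, pow_zero, mul_one]
    calc (∑ k ∈ range (N + 1), gaussBinom x N k * x ^ k.choose 2 * (z * x) ^ k) * (1 + z)
        = ∑ k ∈ range (N + 1), gaussBinom x N k * x ^ (k + 1).choose 2 * z ^ k +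
            ∑ k ∈ range (N + 1), gaussBinom x N k * x ^ (k + 1).choose 2 * z ^ (k + 1) := by
          rw [mul_add, mul_one, sum_mul]
          congr 1 <;> refine sum_congr rfl fun k _ => ?_ <;> rw [Nat.succ_choose_two] <;> ring
      _ = ∑ k ∈ range (N + 1 + 1), gaussBinom x (N + 1) k * x ^ k.choose 2 * z ^ k := by
          rw [hlow, sum_range_succ' _ (N + 1)]
          simp only [gaussBinom_succ_succ, add_mul, sum_add_distrib]
          simp only [gaussBinom_zero_right, Nat.choose_zero_succ, pow_zero, mul_one]
          ring

theorem gaussBinom_mul_qPochhammer (k m : ℕ) :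
    gaussBinom x (k + m) k * qPochhammer x k * qPochhammer x m = qPochhammer x (k + m) := by
  induction k generalizing m with
  | zero => simp
  | succ k ihk =>
    induction m with
    | zero => simp
    | succ m ihm =>
      have hk := ihk (m + 1)
      rw [show k + (m + 1) = k + 1 + m by omega] at hk
      rw [show k + 1 + (m + 1) = k + 1 + m + 1 by omega, gaussBinom_succ_succ,
        qPochhammer_succ x (k + 1 + m), qPochhammer_succ x m]
      rw [qPochhammer_succ x k] at ihm ⊢
      rw [qPochhammer_succ x m] at hk
      linear_combination (1 - x ^ (k + 1)) * hk + x ^ (k + 1) * (1 - x ^ (m + 1)) * ihm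

theorem qPochhammer_eq_sum (N : ℕ) :
    qPochhammer x N =
      ∑ k ∈ range (N + 1), (-1) ^ k * x ^ (k + 1).choose 2 * gaussBinom x N k := by
  have hfactor (j : ℕ) : 1 - x ^ (j + 1) = 1 + -x * x ^ j := by ring
  rw [qPochhammer, prod_congr rfl fun j _ => hfactor j, prod_one_add_mul_pow_eq_sum]
  refine sum_congr rfl fun k _ => ?_
  rw [Nat.succ_choose_two]
  ring

end Algebra

section Analysis

variable {𝕜 : Type*} [NormedField 𝕜] {x : 𝕜}

lemma exists_pos_le_norm_of_tendsto {E : Type*} [NormedAddCommGroup E] {u : ℕ → E} {a : E}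
    (hu : Tendsto u atTop (𝓝 a)) (ha : a ≠ 0) (hu0 : ∀ n, u n ≠ 0) :
    ∃ c > 0, ∀ n, c ≤ ‖u n‖ := by
  obtain ⟨M, hM⟩ := (hu.norm.inv₀ (norm_ne_zero_iff.mpr ha)).bddAbove_range
  have hM' (n : ℕ) : ‖u n‖⁻¹ ≤ M := hM ⟨n, rfl⟩
  have hM_pos : 0 < M := (inv_pos.mpr (norm_pos_iff.mpr (hu0 0))).trans_le (hM' 0)
  exact ⟨M⁻¹, inv_pos.mpr hM_pos, fun n => inv_le_of_inv_le₀ (norm_pos_iff.mpr (hu0 n)) (hM' n)⟩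

lemma one_sub_pow_ne_zero (hx : ‖x‖ < 1) {n : ℕ} (hn : n ≠ 0) : 1 - x ^ n ≠ 0 := by
  rw [sub_ne_zero, ne_comm]
  intro h
  exact (pow_lt_one₀ (norm_nonneg x) hx hn).ne (by rw [← norm_pow, h, norm_one])

lemma qPochhammer_ne_zero (hx : ‖x‖ < 1) (n : ℕ) : qPochhammer x n ≠ 0 :=
  prod_ne_zero_iff.mpr fun j _ => one_sub_pow_ne_zero hx j.succ_ne_zero

lemma summable_norm_neg_pow_succ (hx : ‖x‖ < 1) : Summable fun n : ℕ => ‖-x ^ (n + 1)‖ := by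
  simpa using (summable_nat_add_iff 1).mpr (summable_geometric_of_lt_one (norm_nonneg x) hx)

lemma gaussBinom_add_left_eq_div (hx : ‖x‖ < 1) (k m : ℕ) :
    gaussBinom x (k + m) k = qPochhammer x (k + m) / (qPochhammer x k * qPochhammer x m) := by
  rw [eq_div_iff (mul_ne_zero (qPochhammer_ne_zero hx k) (qPochhammer_ne_zero hx m)),
    ← mul_assoc, gaussBinom_mul_qPochhammer]

variable [CompleteSpace 𝕜]

lemma multipliable_one_sub_pow_succ (hx : ‖x‖ < 1) :
    Multipliable fun n : ℕ => 1 - x ^ (n + 1) := by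
  simp_rw [sub_eq_add_neg]
  exact multipliable_one_add_of_summable (summable_norm_neg_pow_succ hx)

lemma tprod_one_sub_pow_succ_ne_zero (hx : ‖x‖ < 1) : ∏' n : ℕ, (1 - x ^ (n + 1)) ≠ 0 := by
  simp_rw [sub_eq_add_neg]
  refine tprod_one_add_ne_zero_of_summable (fun n => ?_) (summable_norm_neg_pow_succ hx)
  rw [← sub_eq_add_neg]
  exact one_sub_pow_ne_zero hx n.succ_ne_zero

lemma tendsto_qPochhammer (hx : ‖x‖ < 1) :
    Tendsto (qPochhammer x) atTop (𝓝 (∏' n : ℕ, (1 - x ^ (n + 1)))) :=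
  (multipliable_one_sub_pow_succ hx).hasProd.tendsto_prod_nat

lemma exists_norm_gaussBinom_le (hx : ‖x‖ < 1) : ∃ B, ∀ N k, ‖gaussBinom x N k‖ ≤ B := by
  obtain ⟨c, hc, hcP⟩ := exists_pos_le_norm_of_tendsto (tendsto_qPochhammer hx)
    (tprod_one_sub_pow_succ_ne_zero hx) (qPochhammer_ne_zero hx)
  obtain ⟨C, hC⟩ := (tendsto_qPochhammer hx).norm.bddAbove_range
  have hCP (n : ℕ) : ‖qPochhammer x n‖ ≤ C := hC ⟨n, rfl⟩
  refine ⟨C / (c * c), fun N k => ?_⟩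
  rcases le_or_gt k N with hkN | hNk
  · obtain ⟨m, rfl⟩ := Nat.exists_eq_add_of_le hkN
    rw [gaussBinom_add_left_eq_div hx, norm_div, norm_mul]
    exact div_le_div₀ ((norm_nonneg _).trans (hCP 0)) (hCP _) (by positivity)
      (mul_le_mul (hcP k) (hcP m) hc.le (norm_nonneg _))
  · rw [gaussBinom_eq_zero_of_lt x hNk, norm_zero]
    exact div_nonneg ((norm_nonneg _).trans (hCP 0)) (by positivity)

lemma tendsto_gaussBinom (hx : ‖x‖ < 1) (k : ℕ) :
    Tendsto (fun N => gaussBinom x N k) atTop (𝓝 (qPochhammer x k)⁻¹) := by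
  have hL := tprod_one_sub_pow_succ_ne_zero hx
  have hnum :
      Tendsto (fun n => qPochhammer x (k + n)) atTop (𝓝 (∏' n : ℕ, (1 - x ^ (n + 1)))) := by
    simpa only [add_comm k] using (tendsto_add_atTop_iff_nat k).mpr (tendsto_qPochhammer hx)
  have hlim := hnum.div ((tendsto_qPochhammer hx).const_mul (qPochhammer x k))
    (mul_ne_zero (qPochhammer_ne_zero hx k) hL)
  rw [mul_comm, ← div_div, div_self hL, one_div] at hlim
  rw [← tendsto_add_atTop_iff_nat k]
  simp only [add_comm _ k, gaussBinom_add_left_eq_div hx]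
  exact hlim

theorem hasSum_alternating_div_qPochhammer (hx : ‖x‖ < 1) :
    HasSum (fun k => (-1) ^ k * x ^ (k + 1).choose 2 / qPochhammer x k)
      (∏' n : ℕ, (1 - x ^ (n + 1))) := by
  obtain ⟨B, hB⟩ := exists_norm_gaussBinom_le hx
  set F : ℕ → ℕ → 𝕜 := fun N k => (-1) ^ k * x ^ (k + 1).choose 2 * gaussBinom x N k
  have hF_le (N k : ℕ) : ‖F N k‖ ≤ B * ‖x‖ ^ k := by
    have hexp : k ≤ (k + 1).choose 2 := by rw [Nat.succ_choose_two]; omega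
    simp only [F, norm_mul, norm_pow, norm_neg, norm_one, one_pow, one_mul]
    rw [mul_comm B]
    exact mul_le_mul (pow_le_pow_of_le_one (norm_nonneg x) hx.le hexp) (hB N k) (norm_nonneg _)
      (by positivity)
  have hF_lim (k : ℕ) :
      Tendsto (F · k) atTop (𝓝 ((-1) ^ k * x ^ (k + 1).choose 2 / qPochhammer x k)) := by
    simpa only [div_eq_mul_inv] using (tendsto_gaussBinom hx k).const_mul _
  have hF_sum (N : ℕ) : ∑' k, F N k = qPochhammer x N := by
    rw [qPochhammer_eq_sum, tsum_eq_sum fun k hk => ?_]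
    rw [mem_range, not_lt] at hk
    simp only [F, gaussBinom_eq_zero_of_lt x hk, mul_zero]
  have hbound : Summable fun k => B * ‖x‖ ^ k :=
    (summable_geometric_of_lt_one (norm_nonneg x) hx).mul_left B
  have htendsto := tendsto_tsum_of_dominated_convergence hbound hF_lim (.of_forall hF_le)
  simp only [hF_sum] at htendsto
  rw [tendsto_nhds_unique (tendsto_qPochhammer hx) htendsto]
  refine (Summable.of_norm_bounded hbound fun k => ?_).hasSum
  exact le_of_tendsto (hF_lim k).norm (.of_forall fun N => hF_le N k)

end Analysis

/-- Euler's alternating q-series expansion: for `‖x‖ < 1`,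
`∏_{m=1}^∞ (1 - x^m) = 1 + ∑_{n=1}^∞ (-1)^n x^{n(n+1)/2} / ∏_{j=1}^n (1 - x^j)`,
where all products and the series converge. -/
theorem euler_alternating_q_series (x : ℂ) (hx : ‖x‖ < 1) :
    Multipliable (fun m : ℕ => 1 - x ^ (m + 1)) ∧
    Summable (fun n : ℕ => (-1 : ℂ) ^ (n + 1) * x ^ ((n + 1) * (n + 2) / 2) /
      ∏ j ∈ Finset.range (n + 1), (1 - x ^ (j + 1))) ∧
    ∏' m : ℕ, (1 - x ^ (m + 1)) =
      1 + ∑' n : ℕ, (-1 : ℂ) ^ (n + 1) * x ^ ((n + 1) * (n + 2) / 2) /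
        ∏ j ∈ Finset.range (n + 1), (1 - x ^ (j + 1)) := by
  set g : ℕ → ℂ := fun k => (-1) ^ k * x ^ (k + 1).choose 2 / qPochhammer x k with hg
  have hsum : HasSum g (∏' m : ℕ, (1 - x ^ (m + 1))) := hasSum_alternating_div_qPochhammer hx
  have hexp (n : ℕ) : (n + 1) * (n + 2) / 2 = (n + 1 + 1).choose 2 := by
    rw [Nat.choose_two_right, Nat.add_sub_cancel, mul_comm]
  have hterm (n : ℕ) : (-1 : ℂ) ^ (n + 1) * x ^ ((n + 1) * (n + 2) / 2) /
      ∏ j ∈ Finset.range (n + 1), (1 - x ^ (j + 1)) = g (n + 1) := by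
    simp only [hexp, hg, qPochhammer]
  simp only [hterm]
  refine ⟨multipliable_one_sub_pow_succ hx, (summable_nat_add_iff 1).mpr hsum.summable, ?_⟩
  rw [← hsum.tsum_eq, hsum.summable.tsum_eq_zero_add]
  simp [hg]
end

section
/- For all complex numbers q, z with |q| < 1 and |q·z| < 1, one has (∏_{k=1}^∞ (1 − q^k z)) · (1 + ∑_{n=1}^∞ q^n z^n / ∏_{j=1}^n (1 − q^j)) = 1; equivalently 1/∏_{k=1}^∞ (1 − q^k z) = 1 + ∑_{n=1}^∞ q^n z^n / ∏_{j=1}^n (1 − q^j) (Euler's expansion of 1/((1−qz)(1−q²z)(1−q³z)⋯)). -/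
open Filter Topology Finset

/-! With `S(w) = ∑ₙ cₙ wⁿ`, `cₙ = qⁿ / ((1 - q) ⋯ (1 - qⁿ))`, the recurrence
`cₙ₊₁ (1 - qⁿ⁺¹) = q cₙ` gives the functional equation
`(1 - q w) S(w) = S(q w)`, hence `∏_{k<N} (1 - qᵏ⁺¹ z) · S(z) = S(qᴺ z)`. As `N → ∞` the left side
tends to the infinite product times `S(z)`, and the right side tends to `S(0) = 1` by dominated
convergence: the terms of `S(qᴺ z)` are bounded by those of `S(z)`, which converge absolutely by
the ratio test, the ratio `q z / (1 - qⁿ⁺¹)` tending to `q z`. -/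

theorem summable_norm_of_succ_eq_smul {𝕜 E : Type*} [NormedField 𝕜] [SeminormedAddCommGroup E]
    [NormedSpace 𝕜 E] {f : ℕ → E} {a : ℕ → 𝕜} {a₀ : 𝕜} (ha₀ : ‖a₀‖ < 1)
    (ha : Tendsto a atTop (𝓝 a₀)) (hf : ∀ n, f (n + 1) = a n • f n) :
    Summable fun n ↦ ‖f n‖ := by
  obtain ⟨r, hr₀, hr₁⟩ := exists_between ha₀
  refine summable_of_ratio_norm_eventually_le hr₁ ?_
  filter_upwards [ha.norm.eventually (gt_mem_nhds hr₀)] with n hn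
  rw [hf, norm_norm, norm_norm, norm_smul]
  gcongr

section Euler

variable {𝕜 : Type*} [NormedField 𝕜] {q w : 𝕜}

theorem one_sub_ne_zero_of_norm_lt_one {x : 𝕜} (hx : ‖x‖ < 1) : 1 - x ≠ 0 := by
  rw [sub_ne_zero]
  rintro rfl
  simp at hx

theorem norm_pow_le_one_of_norm_le_one (hq : ‖q‖ ≤ 1) (n : ℕ) : ‖q ^ n‖ ≤ 1 := by
  rw [norm_pow]
  exact pow_le_one₀ (norm_nonneg q) hq

theorem one_sub_pow_succ_ne_zero (hq : ‖q‖ < 1) (n : ℕ) : 1 - q ^ (n + 1) ≠ 0 :=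
  one_sub_ne_zero_of_norm_lt_one (by simpa using pow_lt_one₀ (norm_nonneg q) hq n.succ_ne_zero)

noncomputable def eulerCoeff (q : 𝕜) (n : ℕ) : 𝕜 :=
  q ^ n / ∏ j ∈ range n, (1 - q ^ (j + 1))

theorem eulerCoeff_zero (q : 𝕜) : eulerCoeff q 0 = 1 := by
  simp [eulerCoeff]

theorem eulerCoeff_succ_mul {n : ℕ} (hq : 1 - q ^ (n + 1) ≠ 0) :
    eulerCoeff q (n + 1) * (1 - q ^ (n + 1)) = q * eulerCoeff q n := by
  rw [eulerCoeff, eulerCoeff, prod_range_succ, div_mul_eq_mul_div, mul_div_mul_right _ _ hq,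
    pow_succ', mul_div_assoc]

theorem norm_eulerCoeff_mul_pow_le {u : 𝕜} (hu : ‖u‖ ≤ 1) (n : ℕ) :
    ‖eulerCoeff q n * (u * w) ^ n‖ ≤ ‖eulerCoeff q n * w ^ n‖ := by
  rw [mul_pow, mul_left_comm, norm_mul (u ^ n)]
  exact mul_le_of_le_one_left (norm_nonneg _) (norm_pow_le_one_of_norm_le_one hu n)

theorem summable_norm_eulerCoeff_mul_pow (hq : ‖q‖ < 1) (hw : ‖q * w‖ < 1) :
    Summable fun n ↦ ‖eulerCoeff q n * w ^ n‖ := by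
  have hpow : Tendsto (fun n ↦ q ^ (n + 1)) atTop (𝓝 0) :=
    (tendsto_pow_atTop_nhds_zero_of_norm_lt_one hq).comp (tendsto_add_atTop_nat 1)
  have hratio : Tendsto (fun n ↦ q * w / (1 - q ^ (n + 1))) atTop (𝓝 (q * w / (1 - 0))) :=
    tendsto_const_nhds.div (tendsto_const_nhds.sub hpow) (by simp)
  rw [sub_zero, div_one] at hratio
  refine summable_norm_of_succ_eq_smul hw hratio fun n ↦ ?_
  have hne := one_sub_pow_succ_ne_zero hq n
  rw [smul_eq_mul, eq_div_of_mul_eq hne (eulerCoeff_succ_mul hne)]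
  ring

noncomputable def eulerSeries (q w : 𝕜) : 𝕜 :=
  ∑' n, eulerCoeff q n * w ^ n

theorem eulerSeries_zero (q : 𝕜) : eulerSeries q 0 = 1 := by
  rw [eulerSeries, tsum_eq_single 0 fun n hn ↦ by simp [zero_pow hn]]
  simp [eulerCoeff_zero]

variable [CompleteSpace 𝕜]

theorem one_sub_mul_mul_eulerSeries (hq : ‖q‖ < 1) (hw : ‖q * w‖ < 1) :
    (1 - q * w) * eulerSeries q w = eulerSeries q (q * w) := by
  have hs := (summable_norm_eulerCoeff_mul_pow hq hw).of_norm
  have hs' : Summable fun n ↦ eulerCoeff q n * (q * w) ^ n :=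
    .of_norm_bounded (summable_norm_eulerCoeff_mul_pow hq hw) (norm_eulerCoeff_mul_pow_le hq.le)
  have hdiff : eulerSeries q w - eulerSeries q (q * w) = q * w * eulerSeries q w :=
    calc eulerSeries q w - eulerSeries q (q * w)
        = ∑' n, (eulerCoeff q n * w ^ n - eulerCoeff q n * (q * w) ^ n) := (hs.tsum_sub hs').symm
      _ = ∑' n, q * w * (eulerCoeff q n * w ^ n) := by
          rw [(hs.sub hs').tsum_eq_zero_add]
          simp only [pow_zero, mul_one, sub_self, zero_add]
          congr 1 with n
          linear_combination w ^ (n + 1) * eulerCoeff_succ_mul (one_sub_pow_succ_ne_zero hq n)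
      _ = q * w * eulerSeries q w := tsum_mul_left
  linear_combination hdiff

theorem prod_one_sub_pow_mul_mul_eulerSeries (hq : ‖q‖ < 1) (hw : ‖q * w‖ < 1) (N : ℕ) :
    (∏ k ∈ range N, (1 - q ^ (k + 1) * w)) * eulerSeries q w = eulerSeries q (q ^ N * w) := by
  induction N with
  | zero => simp
  | succ N ih =>
    have hN : ‖q * (q ^ N * w)‖ < 1 := by
      rw [mul_left_comm, norm_mul]
      exact (mul_le_of_le_one_left (norm_nonneg _)
        (norm_pow_le_one_of_norm_le_one hq.le N)).trans_lt hw
    rw [prod_range_succ, mul_right_comm, ih, show q ^ (N + 1) * w = q * (q ^ N * w) by ring,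
      ← one_sub_mul_mul_eulerSeries hq hN, mul_comm]

theorem tendsto_eulerSeries_pow_mul (hq : ‖q‖ < 1) (hw : ‖q * w‖ < 1) :
    Tendsto (fun N ↦ eulerSeries q (q ^ N * w)) atTop (𝓝 1) := by
  rw [← eulerSeries_zero q]
  refine tendsto_tsum_of_dominated_convergence (summable_norm_eulerCoeff_mul_pow hq hw)
    (fun n ↦ ?_)
    (.of_forall fun N ↦ norm_eulerCoeff_mul_pow_le (norm_pow_le_one_of_norm_le_one hq.le N))
  have := (tendsto_pow_atTop_nhds_zero_of_norm_lt_one hq).mul_const w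
  rw [zero_mul] at this
  exact (this.pow n).const_mul _

theorem multipliable_one_sub_pow_succ_mul (hq : ‖q‖ < 1) (w : 𝕜) :
    Multipliable fun k ↦ 1 - q ^ (k + 1) * w := by
  simp_rw [sub_eq_add_neg]
  refine multipliable_one_add_of_summable ?_
  simp_rw [norm_neg, norm_mul, norm_pow]
  exact ((summable_geometric_of_lt_one (norm_nonneg q) hq).mul_left ‖q‖).mul_right ‖w‖ |>.congr
    fun k ↦ by ring

theorem tprod_one_sub_pow_succ_mul_mul_eulerSeries (hq : ‖q‖ < 1) (hw : ‖q * w‖ < 1) :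
    (∏' k, (1 - q ^ (k + 1) * w)) * eulerSeries q w = 1 := by
  refine tendsto_nhds_unique ?_ (tendsto_eulerSeries_pow_mul hq hw)
  simpa only [prod_one_sub_pow_mul_mul_eulerSeries hq hw] using
    (multipliable_one_sub_pow_succ_mul hq w).tendsto_prod_tprod_nat.mul_const (eulerSeries q w)

theorem one_add_tsum_eq_eulerSeries (hq : ‖q‖ < 1) (hw : ‖q * w‖ < 1) :
    1 + ∑' n : ℕ, q ^ (n + 1) * w ^ (n + 1) / ∏ j ∈ range (n + 1), (1 - q ^ (j + 1)) =
      eulerSeries q w := by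
  rw [eulerSeries, (summable_norm_eulerCoeff_mul_pow hq hw).of_norm.tsum_eq_zero_add,
    eulerCoeff_zero, pow_zero, mul_one]
  simp only [eulerCoeff, div_mul_eq_mul_div]

end Euler

/-- Euler's expansion of `1/((1−qz)(1−q²z)(1−q³z)⋯)`: for `‖q‖ < 1` and `‖q·z‖ < 1`,
`(∏_{k=1}^∞ (1 - q^k z)) · (1 + ∑_{n=1}^∞ q^n z^n / ∏_{j=1}^n (1 - q^j)) = 1`;
equivalently `1/∏_{k=1}^∞ (1 - q^k z) = 1 + ∑_{n=1}^∞ q^n z^n / ∏_{j=1}^n (1 - q^j)`. -/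
theorem euler_reciprocal_product_expansion (q z : ℂ) (hq : ‖q‖ < 1) (hqz : ‖q * z‖ < 1) :
    (∏' k : ℕ, (1 - q ^ (k + 1) * z)) *
      (1 + ∑' n : ℕ, q ^ (n + 1) * z ^ (n + 1) /
        ∏ j ∈ Finset.range (n + 1), (1 - q ^ (j + 1))) = 1 ∧
    (∏' k : ℕ, (1 - q ^ (k + 1) * z))⁻¹ =
      1 + ∑' n : ℕ, q ^ (n + 1) * z ^ (n + 1) /
        ∏ j ∈ Finset.range (n + 1), (1 - q ^ (j + 1)) := by
  rw [one_add_tsum_eq_eulerSeries hq hqz]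
  have h := tprod_one_sub_pow_succ_mul_mul_eulerSeries hq hqz
  exact ⟨h, inv_eq_of_mul_eq_one_right h⟩
end

section
/- For every complex number x with |x| < 1, (∏_{m=1}^∞ (1 − x^m))³ = ∑_{n=0}^∞ (−1)^n (2n+1) x^{n(n+1)/2} (Jacobi's identity for the cube of Euler's product). -/
noncomputable section
namespace JacobiAux
open Finset PowerSeries

abbrev R : Type := PowerSeries ℂ

def tri (m : ℕ) : ℕ := m * (m + 1) / 2

lemma tri_succ (m : ℕ) : tri (m+1) = tri m + (m+1) := by
  have h : (m+1)*(m+1+1) = m*(m+1) + 2*(m+1) := by ring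
  have e : m*(m+1) % 2 = 0 := Nat.even_iff.mp (Nat.even_mul_succ_self m)
  simp only [tri]; omega

lemma tri_zero : tri 0 = 0 := rfl

lemma le_tri (m : ℕ) : m ≤ tri m := by
  induction m with
  | zero => simp [tri]
  | succ k ih => rw [tri_succ]; omega

lemma tri_strictMono : StrictMono tri :=
  strictMono_nat_of_lt_succ (fun n => by rw [tri_succ]; omega)

def E (N : ℕ) : R := ∏ m ∈ range N, (1 - (X : R) ^ (m+1))

lemma constantCoeff_E (N : ℕ) : constantCoeff (E N) = 1 := by
  simp [E]

lemma E_ne_zero (N : ℕ) : E N ≠ 0 := fun h => by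
  have := constantCoeff_E N; rw [h, map_zero] at this; exact one_ne_zero this.symm

lemma E_zero : E 0 = 1 := by simp [E]

lemma E_succ (N : ℕ) : E (N+1) = E N * (1 - (X:R)^(N+1)) := Finset.prod_range_succ _ _

lemma E_add (p q : ℕ) : E (p + q) = E p * ∏ i ∈ range q, (1 - (X:R)^(p+i+1)) := by
  rw [E, Finset.prod_range_add]; rfl

lemma inv_mul_E (N : ℕ) : (E N)⁻¹ * E N = 1 :=
  PowerSeries.inv_mul_cancel _ (by rw [constantCoeff_E]; exact one_ne_zero)

def gb (a b : ℕ) : R := if b ≤ a then E a * ((E b)⁻¹ * (E (a-b))⁻¹) else 0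

lemma gb_of_lt {a b : ℕ} (h : a < b) : gb a b = 0 := by rw [gb, if_neg (by omega)]

lemma one_inv' : ((1:R))⁻¹ = 1 := by
  have := inv_mul_E 0; rw [E_zero] at this; simpa using this

lemma gb_zero_right (a : ℕ) : gb a 0 = 1 := by
  rw [gb, if_pos (Nat.zero_le a), E_zero, Nat.sub_zero, one_inv']
  have := inv_mul_E a
  calc E a * (1 * (E a)⁻¹) = (E a)⁻¹ * E a := by ring
    _ = 1 := this

lemma gb_self (a : ℕ) : gb a a = 1 := by
  rw [gb, if_pos le_rfl, Nat.sub_self, E_zero, one_inv']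
  have := inv_mul_E a
  calc E a * ((E a)⁻¹ * 1) = (E a)⁻¹ * E a := by ring
    _ = 1 := this

lemma gb_mul_E {a b : ℕ} (h : b ≤ a) : gb a b * (E b * E (a-b)) = E a := by
  rw [gb, if_pos h]
  have h1 := inv_mul_E b
  have h2 := inv_mul_E (a-b)
  calc E a * ((E b)⁻¹ * (E (a-b))⁻¹) * (E b * E (a-b))
      = E a * (((E b)⁻¹ * E b) * ((E (a-b))⁻¹ * E (a-b))) := by ring
    _ = E a := by rw [h1, h2]; ring

lemma pascal1 (a b : ℕ) : gb (a+1) (b+1) = gb a b + X^(b+1) * gb a (b+1) := by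
  rcases lt_trichotomy b a with h | h | h
  · -- main case b < a
    have hba : b ≤ a := le_of_lt h
    have hb1a : b + 1 ≤ a := h
    apply mul_right_cancel₀ (b := E (b+1) * E (a-b))
      (mul_ne_zero (E_ne_zero _) (E_ne_zero _))
    have L : gb (a+1) (b+1) * (E (b+1) * E (a-b)) = E (a+1) := by
      have : a + 1 - (b+1) = a - b := by omega
      rw [← this]; exact gb_mul_E (by omega)
    rw [L, add_mul]
    have R1 : gb a b * (E (b+1) * E (a-b)) = E a * (1 - X^(b+1)) := by
      rw [E_succ b]
      calc gb a b * (E b * (1 - X^(b+1)) * E (a-b))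
          = gb a b * (E b * E (a-b)) * (1 - X^(b+1)) := by ring
        _ = E a * (1 - X^(b+1)) := by rw [gb_mul_E hba]
    have R2 : X^(b+1) * gb a (b+1) * (E (b+1) * E (a-b)) = X^(b+1) * (E a * (1 - X^(a-b))) := by
      have hs : a - b = (a - (b+1)) + 1 := by omega
      have : E (a-b) = E (a-(b+1)) * (1 - X^(a-b)) := by
        rw [hs, E_succ, ← hs]
      rw [this]
      calc X^(b+1) * gb a (b+1) * (E (b+1) * (E (a-(b+1)) * (1 - X^(a-b))))
          = X^(b+1) * (gb a (b+1) * (E (b+1) * E (a-(b+1)))) * (1 - X^(a-b)) := by ring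
        _ = X^(b+1) * (E a * (1 - X^(a-b))) := by rw [gb_mul_E hb1a]; ring
    rw [R1, R2, E_succ a]
    have hx : (X:R)^(b+1) * X^(a-b) = X^(a+1) := by
      rw [← pow_add]; congr 1; omega
    rw [← hx]; ring
  · subst h
    rw [gb_self, gb_self, gb_of_lt (by omega), mul_zero, add_zero]
  · rw [gb_of_lt (by omega), gb_of_lt (by omega), gb_of_lt (by omega), mul_zero, add_zero]

lemma pascal2 (a b : ℕ) : gb (a+1) (b+1) = X^(a-b) * gb a b + gb a (b+1) := by
  rcases lt_trichotomy b a with h | h | h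
  · have hba : b ≤ a := le_of_lt h
    have hb1a : b + 1 ≤ a := h
    apply mul_right_cancel₀ (b := E (b+1) * E (a-b))
      (mul_ne_zero (E_ne_zero _) (E_ne_zero _))
    have L : gb (a+1) (b+1) * (E (b+1) * E (a-b)) = E (a+1) := by
      have : a + 1 - (b+1) = a - b := by omega
      rw [← this]; exact gb_mul_E (by omega)
    rw [L, add_mul]
    have R1 : X^(a-b) * gb a b * (E (b+1) * E (a-b)) = X^(a-b) * (E a * (1 - X^(b+1))) := by
      rw [E_succ b]
      calc X^(a-b) * gb a b * (E b * (1 - X^(b+1)) * E (a-b))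
          = X^(a-b) * (gb a b * (E b * E (a-b))) * (1 - X^(b+1)) := by ring
        _ = X^(a-b) * (E a * (1 - X^(b+1))) := by rw [gb_mul_E hba]; ring
    have R2 : gb a (b+1) * (E (b+1) * E (a-b)) = E a * (1 - X^(a-b)) := by
      have hs : a - b = (a - (b+1)) + 1 := by omega
      have hE : E (a-b) = E (a-(b+1)) * (1 - X^(a-b)) := by rw [hs, E_succ, ← hs]
      rw [hE]
      calc gb a (b+1) * (E (b+1) * (E (a-(b+1)) * (1 - X^(a-b))))
          = gb a (b+1) * (E (b+1) * E (a-(b+1))) * (1 - X^(a-b)) := by ring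
        _ = E a * (1 - X^(a-b)) := by rw [gb_mul_E hb1a]
    rw [R1, R2, E_succ a]
    have hx : (X:R)^(a-b) * X^(b+1) = X^(a+1) := by
      rw [← pow_add]; congr 1; omega
    rw [← hx]; ring
  · subst h
    rw [gb_self, gb_self, gb_of_lt (by omega), Nat.sub_self, pow_zero, one_mul, add_zero]
  · rw [gb_of_lt (by omega), gb_of_lt (by omega), gb_of_lt (by omega), mul_zero, zero_add]


def w (N k : ℕ) : ℕ := if N ≤ k then tri (k - N) else tri (N - 1 - k)

lemma w_eq_of_le {N k : ℕ} (h : N ≤ k) : w N k = tri (k - N) := if_pos h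
lemma w_eq_of_gt {N k : ℕ} (h : k < N) : w N k = tri (N - 1 - k) := if_neg (by omega)

lemma w2 (N K : ℕ) (h : 1 ≤ K) : w (N+1) K = w N (K-1) := by
  rcases le_or_gt (N+1) K with hc | hc
  · rw [w_eq_of_le hc, w_eq_of_le (by omega), show K - (N+1) = K - 1 - N by omega]
  · rw [w_eq_of_gt hc, w_eq_of_gt (by omega), show N+1-1-K = N - 1 - (K-1) by omega]

lemma w3 (N K : ℕ) : w (N+1) K + K = w N K + N := by
  rcases le_or_gt (N+1) K with hc | hc
  · rw [w_eq_of_le hc, w_eq_of_le (by omega)]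
    rw [show K - N = (K - (N+1)) + 1 by omega, tri_succ]; omega
  · rcases Nat.eq_or_lt_of_le (Nat.lt_succ_iff.mp hc) with he | hlt
    · subst he
      rw [w_eq_of_gt hc, w_eq_of_le le_rfl, show K+1-1-K = 0 by omega,
        Nat.sub_self, tri_zero]
    · rw [w_eq_of_gt hc, w_eq_of_gt (by omega)]
      rw [show N + 1 - 1 - K = (N-1-K)+1 by omega, tri_succ]; omega

lemma w1 (N K : ℕ) (h2 : 2 ≤ K) (hK : K ≤ 2*N+2) :
    w (N+1) K + (2*N+2-K) = w N (K-2) + (N+1) := by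
  rcases le_or_gt (N+2) K with hc | hc
  · rw [w_eq_of_le (by omega), w_eq_of_le (by omega)]
    rw [show K - (N+1) = (K - 2 - N) + 1 by omega, tri_succ]; omega
  · rcases Nat.eq_or_lt_of_le (Nat.lt_succ_iff.mp hc) with he | hlt
    · rw [w_eq_of_le (by omega), w_eq_of_gt (by omega)]
      rw [show K - (N+1) = 0 by omega, show N - 1 - (K-2) = 0 by omega, tri_zero]; omega
    · rw [w_eq_of_gt (by omega), w_eq_of_gt (by omega)]
      rw [show N + 1 - 1 - K = N - K by omega,
        show N - 1 - (K-2) = (N - K) + 1 by omega, tri_succ]; omega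

def bb (N k : ℕ) : R := gb (2*N) k * X ^ (w N k)

lemma bb_eq_zero {N k : ℕ} (h : 2*N < k) : bb N k = 0 := by
  rw [bb, gb_of_lt h, zero_mul]

lemma pascalStep (N K : ℕ) :
    bb (N+1) K = X^N * bb N K + (if 1 ≤ K then (1+X^(2*N+1)) * bb N (K-1) else 0)
      + (if 2 ≤ K then X^(N+1) * bb N (K-2) else 0) := by
  rcases Nat.lt_or_ge (2*N+2) K with hbig | hK
  · -- all zero
    rw [bb_eq_zero (by omega), bb_eq_zero (show 2*N < K by omega)]
    rw [if_pos (by omega), if_pos (by omega), bb_eq_zero (show 2*N < K - 1 by omega),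
      bb_eq_zero (show 2*N < K - 2 by omega)]
    ring
  rcases Nat.lt_or_ge K 1 with h0 | h1
  · -- K = 0
    have hK0 : K = 0 := by omega
    subst hK0
    rw [if_neg (by omega), if_neg (by omega), add_zero, add_zero]
    rw [bb, bb, show 2*(N+1) = 2*N+1+1 by ring]
    rw [show gb (2*N+1+1) 0 = 1 from gb_zero_right _, gb_zero_right, one_mul, one_mul]
    rw [← pow_add]
    congr 1
    cases N with
    | zero =>
      rw [w_eq_of_gt (by omega), w_eq_of_le (by omega)]
      norm_num
    | succ M =>
      rw [w_eq_of_gt (by omega), w_eq_of_gt (by omega)]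
      rw [show M + 1 + 1 - 1 - 0 = M + 1 by omega, show M + 1 - 1 - 0 = M by omega,
        tri_succ]; omega
  rcases Nat.lt_or_ge K 2 with h1' | h2
  · -- K = 1
    have hK1 : K = 1 := by omega
    subst hK1
    rw [if_pos le_rfl, if_neg (by omega), add_zero]
    have hgb : gb (2*N+2) 1 = X^(2*N+1) + 1 + X * gb (2*N) 1 := by
      have p2 := pascal2 (2*N+1) 0
      have p1 := pascal1 (2*N) 0
      rw [gb_zero_right] at p2 p1
      rw [show 2*N+1+1 = 2*N+2 by ring] at p2
      rw [p2, p1, Nat.sub_zero, mul_one, pow_one]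
      ring
    rw [show (1:ℕ) - 1 = 0 from rfl]
    rw [bb, bb, bb, show 2*(N+1) = 2*N+2 by ring, hgb, gb_zero_right, one_mul]
    have e3 : w (N+1) 1 + 1 = w N 1 + N := w3 N 1
    have hx : (X:R) * X ^ (w (N+1) 1) = X^N * X ^ (w N 1) := by
      rw [← pow_succ', ← pow_add]; congr 1; omega
    calc (X^(2*N+1) + 1 + X * gb (2*N) 1) * X ^ (w (N+1) 1)
        = (1 + X^(2*N+1)) * X ^ (w (N+1) 1) + gb (2*N) 1 * (X * X ^ (w (N+1) 1)) := by ring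
      _ = (1 + X^(2*N+1)) * X ^ (w N 0) + gb (2*N) 1 * (X^N * X ^ (w N 1)) := by
          rw [hx, w2 N 1 le_rfl]
      _ = X^N * (gb (2*N) 1 * X ^ (w N 1)) + (1+X^(2*N+1)) * X ^ (w N 0) := by ring
  · -- 2 ≤ K ≤ 2N+2
    rw [if_pos (by omega), if_pos h2]
    have p2 := pascal2 (2*N+1) (K-1)
    rw [show K - 1 + 1 = K by omega, show 2*N+1+1 = 2*N+2 by ring,
      show 2*N+1-(K-1) = 2*N+2-K by omega] at p2
    have p1 := pascal1 (2*N) (K-1)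
    rw [show K - 1 + 1 = K by omega] at p1
    have p3 := pascal1 (2*N) (K-2)
    rw [show K - 2 + 1 = K - 1 by omega] at p3
    have e1 := w1 N K h2 hK
    have e2 := w2 N K (by omega)
    have e3 := w3 N K
    rw [bb, show 2*(N+1) = 2*N+2 by ring, p2, p3, p1]
    rw [bb, bb, bb]
    -- goal: (X^(2N+2-K)*(gb (2N) (K-2) + X^(K-1)*gb (2N) (K-1)) + (gb (2N) (K-1) + X^K * gb (2N) K)) * X^(w (N+1) K) = ...
    have hx1 : (X:R)^(2*N+2-K) * X ^ (w (N+1) K) = X^(N+1) * X ^ (w N (K-2)) := by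
      rw [← pow_add, ← pow_add]; congr 1; omega
    have hx2 : (X:R)^(2*N+2-K) * X^(K-1) * X ^ (w (N+1) K) = X^(2*N+1) * X ^ (w N (K-1)) := by
      rw [← pow_add, ← pow_add, ← pow_add]; congr 1
      have : 2*N+2-K + (K-1) = 2*N+1 := by omega
      omega
    have hx3 : (X:R)^K * X ^ (w (N+1) K) = X^N * X ^ (w N K) := by
      rw [← pow_add, ← pow_add]; congr 1; omega
    calc (X^(2*N+2-K) * (gb (2*N) (K-2) + X^(K-1) * gb (2*N) (K-1))
            + (gb (2*N) (K-1) + X^K * gb (2*N) K)) * X ^ (w (N+1) K)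
        = gb (2*N) (K-2) * (X^(2*N+2-K) * X ^ (w (N+1) K))
          + gb (2*N) (K-1) * (X^(2*N+2-K) * X^(K-1) * X ^ (w (N+1) K))
          + gb (2*N) (K-1) * X ^ (w (N+1) K) + gb (2*N) K * (X^K * X ^ (w (N+1) K)) := by ring
      _ = gb (2*N) (K-2) * (X^(N+1) * X ^ (w N (K-2)))
          + gb (2*N) (K-1) * (X^(2*N+1) * X ^ (w N (K-1)))
          + gb (2*N) (K-1) * X ^ (w N (K-1)) + gb (2*N) K * (X^N * X ^ (w N K)) := by
            rw [hx1, hx2, hx3, e2]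
      _ = X^N * (gb (2*N) K * X ^ (w N K)) + (1+X^(2*N+1)) * (gb (2*N) (K-1) * X ^ (w N (K-1)))
          + X^(N+1) * (gb (2*N) (K-2) * X ^ (w N (K-2))) := by ring

section FJTP
open Polynomial in
def LS (N : ℕ) : Polynomial R :=
  (∏ m ∈ range N, (1 + Polynomial.C ((X:R)^(m+1)) * Polynomial.X)) *
  (∏ m ∈ range N, (Polynomial.X + Polynomial.C ((X:R)^m)))

def RS (N : ℕ) : Polynomial R :=
  ∑ k ∈ range (2*N+1), Polynomial.C (bb N k) * Polynomial.X ^ k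

lemma RS_coeff (N j : ℕ) : (RS N).coeff j = bb N j := by
  rw [RS, Polynomial.finset_sum_coeff]
  simp only [Polynomial.coeff_C_mul, Polynomial.coeff_X_pow, mul_ite, mul_one, mul_zero]
  rw [Finset.sum_ite_eq (range (2*N+1)) j (fun k => bb N k)]
  split_ifs with h
  · rfl
  · rw [Finset.mem_range, not_lt] at h
    exact (bb_eq_zero (by omega)).symm

theorem FJTP (N : ℕ) : LS N = RS N := by
  induction N with
  | zero =>
    rw [LS, RS]
    simp only [range_zero, Finset.prod_empty, one_mul, Nat.mul_zero, Nat.zero_add,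
      range_one, Finset.sum_singleton, pow_zero, mul_one]
    rw [bb, gb_zero_right, w_eq_of_le le_rfl, Nat.sub_self, tri_zero, pow_zero, one_mul, map_one]
  | succ N ih =>
    have hstep : LS (N+1) = LS N *
        ((1 + Polynomial.C ((X:R)^(N+1)) * Polynomial.X) * (Polynomial.X + Polynomial.C ((X:R)^N))) := by
      rw [LS, LS, Finset.prod_range_succ, Finset.prod_range_succ]
      ring
    rw [hstep, ih]
    have expand : (1 + Polynomial.C ((X:R)^(N+1)) * Polynomial.X) * (Polynomial.X + Polynomial.C ((X:R)^N))
        = Polynomial.C ((X:R)^N) + (1 + Polynomial.C ((X:R)^(2*N+1))) * Polynomial.X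
          + Polynomial.C ((X:R)^(N+1)) * Polynomial.X ^ 2 := by
      have hxx : (X:R)^(N+1) * (X:R)^N = (X:R)^(2*N+1) := by
        rw [← pow_add]; congr 1; omega
      rw [← hxx, map_mul]
      ring
    rw [expand]
    apply Polynomial.ext
    intro K
    rw [mul_add, mul_add, Polynomial.coeff_add, Polynomial.coeff_add]
    have t1 : (RS N * Polynomial.C ((X:R)^N)).coeff K = bb N K * (X:R)^N := by
      rw [Polynomial.coeff_mul_C, RS_coeff]
    have t2 : (RS N * ((1 + Polynomial.C ((X:R)^(2*N+1))) * Polynomial.X)).coeff K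
        = if 1 ≤ K then bb N (K-1) * (1 + (X:R)^(2*N+1)) else 0 := by
      rw [show RS N * ((1 + Polynomial.C ((X:R)^(2*N+1))) * Polynomial.X)
          = (RS N * (1 + Polynomial.C ((X:R)^(2*N+1)))) * Polynomial.X ^ 1 by ring]
      rw [Polynomial.coeff_mul_X_pow']
      split_ifs with h
      · rw [mul_add, mul_one, Polynomial.coeff_add, Polynomial.coeff_mul_C, RS_coeff]
        ring
      · rfl
    have t3 : (RS N * (Polynomial.C ((X:R)^(N+1)) * Polynomial.X ^ 2)).coeff K
        = if 2 ≤ K then bb N (K-2) * (X:R)^(N+1) else 0 := by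
      rw [show RS N * (Polynomial.C ((X:R)^(N+1)) * Polynomial.X ^ 2)
          = (RS N * Polynomial.C ((X:R)^(N+1))) * Polynomial.X ^ 2 by ring]
      rw [Polynomial.coeff_mul_X_pow']
      split_ifs with h
      · rw [Polynomial.coeff_mul_C, RS_coeff]
      · rfl
    rw [t1, t2, t3, RS_coeff, pascalStep]
    split_ifs <;> ring

end FJTP

lemma FJ' (M : ℕ) :
    ∑ k ∈ range (2*(M+1)+1), bb (M+1) k * (k : R) * (-1)^(k-1)
      = (-1)^M * (E (M+1) * E M) := by
  have h := FJTP (M+1)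
  have hd : Polynomial.eval (-1 : R) (Polynomial.derivative (LS (M+1)))
      = Polynomial.eval (-1 : R) (Polynomial.derivative (RS (M+1))) := by rw [h]
  have hR : Polynomial.eval (-1 : R) (Polynomial.derivative (RS (M+1)))
      = ∑ k ∈ range (2*(M+1)+1), bb (M+1) k * (k : R) * (-1)^(k-1) := by
    rw [RS, Polynomial.derivative_sum, Polynomial.eval_finset_sum]
    apply Finset.sum_congr rfl
    intro k _
    rw [Polynomial.derivative_C_mul_X_pow, Polynomial.eval_mul, Polynomial.eval_C,
      Polynomial.eval_pow, Polynomial.eval_X]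
  have hL : Polynomial.eval (-1 : R) (Polynomial.derivative (LS (M+1)))
      = (-1)^M * (E (M+1) * E M) := by
    have hfac : LS (M+1) = ((∏ m ∈ range (M+1), (1 + Polynomial.C ((X:R)^(m+1)) * Polynomial.X)) *
        (∏ i ∈ range M, (Polynomial.X + Polynomial.C ((X:R)^(i+1))))) * (Polynomial.X + 1) := by
      rw [LS, Finset.prod_range_succ' (fun m => Polynomial.X + Polynomial.C ((X:R)^m)) M]
      rw [pow_zero, map_one]
      ring
    rw [hfac, Polynomial.derivative_mul, Polynomial.eval_add, Polynomial.eval_mul,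
      Polynomial.eval_add, Polynomial.eval_X, Polynomial.eval_one, neg_add_cancel, mul_zero,
      Polynomial.eval_mul]
    have hd1 : Polynomial.eval (-1:R) (Polynomial.derivative (Polynomial.X + 1)) = 1 := by
      rw [Polynomial.derivative_add, Polynomial.derivative_X, Polynomial.derivative_one,
        add_zero, Polynomial.eval_one]
    rw [hd1, mul_one, zero_add, Polynomial.eval_mul]
    have hA : Polynomial.eval (-1:R) (∏ m ∈ range (M+1), (1 + Polynomial.C ((X:R)^(m+1)) * Polynomial.X))
        = E (M+1) := by
      rw [Polynomial.eval_prod, E]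
      apply Finset.prod_congr rfl
      intro m _
      rw [Polynomial.eval_add, Polynomial.eval_one, Polynomial.eval_mul, Polynomial.eval_C,
        Polynomial.eval_X]
      ring
    have hB : Polynomial.eval (-1:R) (∏ i ∈ range M, (Polynomial.X + Polynomial.C ((X:R)^(i+1))))
        = (-1)^M * E M := by
      rw [Polynomial.eval_prod]
      have : ∀ i ∈ range M, Polynomial.eval (-1:R) (Polynomial.X + Polynomial.C ((X:R)^(i+1)))
          = (-1) * (1 - (X:R)^(i+1)) := by
        intro i _
        rw [Polynomial.eval_add, Polynomial.eval_X, Polynomial.eval_C]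
        ring
      rw [Finset.prod_congr rfl this, Finset.prod_mul_distrib, Finset.prod_const, E,
        Finset.card_range]
    rw [hA, hB]
    ring
  rw [← hR, ← hd, hL]

/-! ## congruence mod X^(n+1) -/

def Cg (n : ℕ) (A B : R) : Prop := ∀ j ≤ n, (coeff j) A = (coeff j) B

lemma Cg.refl {n : ℕ} {A : R} : Cg n A A := fun _ _ => _root_.rfl

lemma Cg.symm {n : ℕ} {A B : R} (h : Cg n A B) : Cg n B A := fun j hj => (h j hj).symm

lemma Cg.trans {n : ℕ} {A B C : R} (h : Cg n A B) (h' : Cg n B C) : Cg n A C :=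
  fun j hj => (h j hj).trans (h' j hj)

lemma Cg.add {n : ℕ} {A B A' B' : R} (h : Cg n A B) (h' : Cg n A' B') :
    Cg n (A + A') (B + B') := fun j hj => by
  rw [map_add, map_add, h j hj, h' j hj]

lemma Cg.mul {n : ℕ} {A B A' B' : R} (h : Cg n A B) (h' : Cg n A' B') :
    Cg n (A * A') (B * B') := by
  intro j hj
  rw [PowerSeries.coeff_mul, PowerSeries.coeff_mul]
  apply Finset.sum_congr rfl
  intro p hp
  rw [Finset.HasAntidiagonal.mem_antidiagonal] at hp
  rw [h p.1 (by omega), h' p.2 (by omega)]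

lemma Cg.sum {n : ℕ} {ι : Type} {s : Finset ι} {f g : ι → R}
    (h : ∀ i ∈ s, Cg n (f i) (g i)) : Cg n (∑ i ∈ s, f i) (∑ i ∈ s, g i) := fun j hj => by
  rw [map_sum, map_sum]
  exact Finset.sum_congr rfl (fun i hi => h i hi j hj)

lemma Cg_X_pow {n m : ℕ} (h : n < m) : Cg n ((X:R)^m) 0 := by
  intro j hj
  rw [PowerSeries.coeff_X_pow, map_zero, if_neg (by omega)]

lemma Cg_one_sub_X_pow {n m : ℕ} (h : n < m) : Cg n (1 - (X:R)^m) 1 := by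
  intro j hj
  rw [map_sub, Cg_X_pow h j hj, map_zero, sub_zero]

lemma Cg_prod_one {n : ℕ} {ι : Type} {s : Finset ι} {f : ι → R}
    (h : ∀ i ∈ s, Cg n (f i) 1) : Cg n (∏ i ∈ s, f i) 1 := by
  classical
  induction s using Finset.induction_on with
  | empty => simp only [Finset.prod_empty]; exact Cg.refl
  | @insert a s' ha ih =>
    rw [Finset.prod_insert ha]
    have := Cg.mul (h a (Finset.mem_insert_self a s'))
      (ih (fun i hi => h i (Finset.mem_insert_of_mem hi)))
    rwa [one_mul] at this

lemma Cg_inv_one {n : ℕ} {u : R} (hu : constantCoeff u = 1) (h : Cg n u 1) :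
    Cg n u⁻¹ 1 := by
  intro j hj
  have hmul : u⁻¹ * u = 1 := PowerSeries.inv_mul_cancel _ (by rw [hu]; exact one_ne_zero)
  have h1 : (coeff j) (1 : R) = (coeff j) (u⁻¹ * u) := by rw [hmul]
  rw [PowerSeries.coeff_mul] at h1
  rw [Finset.sum_eq_single (j, 0)] at h1
  · rw [h1]
    have : (coeff 0) u = 1 := by
      rw [PowerSeries.coeff_zero_eq_constantCoeff, hu]
    rw [this, mul_one]
  · intro p hp hne
    rw [Finset.HasAntidiagonal.mem_antidiagonal] at hp
    have hp2 : p.2 ≠ 0 := by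
      intro h0
      apply hne
      have : p.1 = j := by omega
      rw [← this, ← h0]
    have : (coeff p.2) u = 0 := by
      rw [h p.2 (by omega), PowerSeries.coeff_one, if_neg hp2]
    rw [this, mul_zero]
  · intro hmem
    exact absurd (Finset.HasAntidiagonal.mem_antidiagonal.mpr (by omega)) hmem

lemma gb_mul_E_eq {a b : ℕ} (h : b ≤ a) :
    gb a b * E b = ∏ i ∈ range b, (1 - (X:R)^(a-b+i+1)) := by
  apply mul_right_cancel₀ (E_ne_zero (a-b))
  calc gb a b * E b * E (a-b) = gb a b * (E b * E (a-b)) := by ring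
    _ = E a := gb_mul_E h
    _ = E (a-b) * ∏ i ∈ range b, (1 - (X:R)^((a-b)+i+1)) := by
        rw [← E_add, Nat.sub_add_cancel h]
    _ = (∏ i ∈ range b, (1 - (X:R)^(a-b+i+1))) * E (a-b) := by ring

lemma Cg_gb_mul_E {n a b M : ℕ} (hba : b ≤ a) (hb : n < b) (hab : n < a - b) (hM : n ≤ M) :
    Cg n (gb a b * E M) 1 := by
  have h1 : Cg n (gb a b * E b) 1 := by
    rw [gb_mul_E_eq hba]
    apply Cg_prod_one
    intro i _
    exact Cg_one_sub_X_pow (by omega)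
  rcases le_total b M with hbM | hMb
  · have hEM : E M = E b * ∏ i ∈ range (M-b), (1 - (X:R)^(b+i+1)) := by
      rw [← E_add, Nat.add_sub_cancel' hbM]
    have hV : Cg n (∏ i ∈ range (M-b), (1 - (X:R)^(b+i+1))) 1 := by
      apply Cg_prod_one
      intro i _
      exact Cg_one_sub_X_pow (by omega)
    have : Cg n ((gb a b * E b) * ∏ i ∈ range (M-b), (1 - (X:R)^(b+i+1))) (1 * 1) :=
      Cg.mul h1 hV
    rw [one_mul] at this
    rw [hEM, ← mul_assoc]
    exact this
  · have hEb : E b = E M * ∏ i ∈ range (b-M), (1 - (X:R)^(M+i+1)) := by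
      rw [← E_add, Nat.add_sub_cancel' hMb]
    have hV : Cg n (∏ i ∈ range (b-M), (1 - (X:R)^(M+i+1))) 1 := by
      apply Cg_prod_one
      intro i _
      exact Cg_one_sub_X_pow (by omega)
    have step1 : Cg n (gb a b * E M) ((gb a b * E M) * ∏ i ∈ range (b-M), (1 - (X:R)^(M+i+1))) := by
      have := Cg.mul (Cg.refl (n := n) (A := gb a b * E M)) hV.symm
      rwa [mul_one] at this
    apply step1.trans
    have : (gb a b * E M) * ∏ i ∈ range (b-M), (1 - (X:R)^(M+i+1)) = gb a b * E b := by
      rw [hEb]; ring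
    rw [this]
    exact h1

/-! ## the core coefficient identity -/

set_option maxHeartbeats 1000000 in
theorem core (n M : ℕ) (h : 2*n + 2 ≤ M + 1) :
    (coeff n) ((E (M+1))^3)
      = ∑ j ∈ range (M+2), (if tri j = n then ((-1:ℂ))^j * (2*j+1) else 0) := by
  set N := M + 1 with hNdef
  -- the two target scalar families
  have hgoal : Cg n ((E N)^3)
      ((-1:R)^M * ((∑ j ∈ range N, PowerSeries.C (((N-1-j:ℕ):ℂ) * (-1)^(N-j)) * X^(tri j))
        + ∑ j ∈ range (N+1), PowerSeries.C (((N+j:ℕ):ℂ) * (-1)^(N+j-1)) * X^(tri j))) := by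
    -- start from FJ' multiplied by E N
    have h1 : (∑ k ∈ range (2*N+1), bb N k * (k:R) * (-1)^(k-1)) * E N
        = (-1)^M * (E N * E M) * E N := by rw [FJ' M]
    rw [Finset.sum_mul] at h1
    have hsplit : ∑ k ∈ range (2*N+1), bb N k * (k:R) * (-1)^(k-1) * E N
        = (∑ j ∈ range N, bb N (N-1-j) * ((N-1-j : ℕ):R) * (-1)^(N-1-j-1) * E N)
          + ∑ j ∈ range (N+1), bb N (N+j) * ((N+j : ℕ):R) * (-1)^(N+j-1) * E N := by
      rw [show 2*N+1 = N + (N+1) by ring, Finset.sum_range_add]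
      congr 1
      exact (Finset.sum_range_reflect (fun k => bb N k * (k:R) * (-1)^(k-1) * E N) N).symm
    -- positive side
    have hpos : Cg n (∑ j ∈ range (N+1), bb N (N+j) * ((N+j : ℕ):R) * (-1)^(N+j-1) * E N)
        (∑ j ∈ range (N+1), PowerSeries.C (((N+j:ℕ):ℂ) * (-1)^(N+j-1)) * X^(tri j)) := by
      apply Cg.sum
      intro j hj
      have hw : w N (N+j) = tri j := by
        rw [w_eq_of_le (by omega), show N+j-N = j by omega]
      have hC : (PowerSeries.C) (((N+j:ℕ):ℂ) * (-1)^(N+j-1))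
          = ((N+j:ℕ):R) * (-1:R)^(N+j-1) := by
        rw [map_mul, map_natCast, map_pow, map_neg, map_one]
      rcases le_or_gt (tri j) n with htj | htj
      · have hjn : j ≤ n := le_trans (le_tri j) htj
        have hgb : Cg n (gb (2*N) (N+j) * E N) 1 :=
          Cg_gb_mul_E (by omega) (by omega) (by omega) (by omega)
        have hrw : bb N (N+j) * ((N+j : ℕ):R) * (-1)^(N+j-1) * E N
            = (gb (2*N) (N+j) * E N) * (PowerSeries.C (((N+j:ℕ):ℂ) * (-1)^(N+j-1)) * X^(tri j)) := by
          rw [bb, hw, hC]; ring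
        rw [hrw]
        have := Cg.mul hgb (Cg.refl (n := n)
          (A := PowerSeries.C (((N+j:ℕ):ℂ) * (-1)^(N+j-1)) * X^(tri j)))
        rwa [one_mul] at this
      · -- both sides ≡ 0
        have hz : Cg n ((X:R)^(tri j)) 0 := Cg_X_pow htj
        have hrw : bb N (N+j) * ((N+j : ℕ):R) * (-1)^(N+j-1) * E N
            = (gb (2*N) (N+j) * ((N+j : ℕ):R) * (-1)^(N+j-1) * E N) * (X:R)^(tri j) := by
          rw [bb, hw]; ring
        have l1 : Cg n (bb N (N+j) * ((N+j : ℕ):R) * (-1)^(N+j-1) * E N) 0 := by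
          rw [hrw]
          have := Cg.mul (Cg.refl (n := n)
            (A := gb (2*N) (N+j) * ((N+j : ℕ):R) * (-1)^(N+j-1) * E N)) hz
          rwa [mul_zero] at this
        have l2 : Cg n (PowerSeries.C (((N+j:ℕ):ℂ) * (-1)^(N+j-1)) * X^(tri j)) 0 := by
          have := Cg.mul (Cg.refl (n := n)
            (A := PowerSeries.C (((N+j:ℕ):ℂ) * (-1)^(N+j-1)))) hz
          rwa [mul_zero] at this
        exact l1.trans l2.symm
    -- negative side
    have hneg : Cg n (∑ j ∈ range N, bb N (N-1-j) * ((N-1-j : ℕ):R) * (-1)^(N-1-j-1) * E N)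
        (∑ j ∈ range N, PowerSeries.C (((N-1-j:ℕ):ℂ) * (-1)^(N-j)) * X^(tri j)) := by
      apply Cg.sum
      intro j hj
      rw [Finset.mem_range] at hj
      have hw : w N (N-1-j) = tri j := by
        rw [w_eq_of_gt (by omega), show N-1-(N-1-j) = j by omega]
      have hC : (PowerSeries.C) (((N-1-j:ℕ):ℂ) * (-1)^(N-j))
          = ((N-1-j:ℕ):R) * (-1:R)^(N-j) := by
        rw [map_mul, map_natCast, map_pow, map_neg, map_one]
      rcases le_or_gt (tri j) n with htj | htj
      · have hjn : j ≤ n := le_trans (le_tri j) htj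
        have hsign : ((-1:R))^(N-1-j-1) = (-1:R)^(N-j) := by
          rw [show N-j = (N-1-j-1) + 2 by omega, pow_add]
          norm_num
        have hgb : Cg n (gb (2*N) (N-1-j) * E N) 1 :=
          Cg_gb_mul_E (by omega) (by omega) (by omega) (by omega)
        have hrw : bb N (N-1-j) * ((N-1-j : ℕ):R) * (-1)^(N-1-j-1) * E N
            = (gb (2*N) (N-1-j) * E N)
              * (PowerSeries.C (((N-1-j:ℕ):ℂ) * (-1)^(N-j)) * X^(tri j)) := by
          rw [bb, hw, hC, hsign]; ring
        rw [hrw]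
        have := Cg.mul hgb (Cg.refl (n := n)
          (A := PowerSeries.C (((N-1-j:ℕ):ℂ) * (-1)^(N-j)) * X^(tri j)))
        rwa [one_mul] at this
      · have hz : Cg n ((X:R)^(tri j)) 0 := Cg_X_pow htj
        have hrw : bb N (N-1-j) * ((N-1-j : ℕ):R) * (-1)^(N-1-j-1) * E N
            = (gb (2*N) (N-1-j) * ((N-1-j : ℕ):R) * (-1)^(N-1-j-1) * E N) * (X:R)^(tri j) := by
          rw [bb, hw]; ring
        have l1 : Cg n (bb N (N-1-j) * ((N-1-j : ℕ):R) * (-1)^(N-1-j-1) * E N) 0 := by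
          rw [hrw]
          have := Cg.mul (Cg.refl (n := n)
            (A := gb (2*N) (N-1-j) * ((N-1-j : ℕ):R) * (-1)^(N-1-j-1) * E N)) hz
          rwa [mul_zero] at this
        have l2 : Cg n (PowerSeries.C (((N-1-j:ℕ):ℂ) * (-1)^(N-j)) * X^(tri j)) 0 := by
          have := Cg.mul (Cg.refl (n := n)
            (A := PowerSeries.C (((N-1-j:ℕ):ℂ) * (-1)^(N-j)))) hz
          rwa [mul_zero] at this
        exact l1.trans l2.symm
    -- RHS side
    have hrhs : Cg n ((-1:R)^M * (E N * E M) * E N) ((E N)^3 * ((-1:R)^M)) := by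
      have hEN : E N = E M * (1 - (X:R)^N) := E_succ M
      have hx : (E N)^3 * ((-1:R)^M)
          = ((-1:R)^M * (E N * E M) * E N) * (1 - (X:R)^N) := by
        calc (E N)^3 * ((-1:R)^M) = (E N * E N * (E M * (1 - (X:R)^N))) * ((-1:R)^M) := by
              rw [← hEN]; ring
          _ = ((-1:R)^M * (E N * E M) * E N) * (1 - (X:R)^N) := by ring
      rw [hx]
      have := Cg.mul (Cg.refl (n := n) (A := (-1:R)^M * (E N * E M) * E N))
        (Cg_one_sub_X_pow (show n < N by omega))
      rw [mul_one] at this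
      exact this.symm
    -- combine
    have hcomb : Cg n ((E N)^3 * ((-1:R)^M))
        ((∑ j ∈ range N, PowerSeries.C (((N-1-j:ℕ):ℂ) * (-1)^(N-j)) * X^(tri j))
          + ∑ j ∈ range (N+1), PowerSeries.C (((N+j:ℕ):ℂ) * (-1)^(N+j-1)) * X^(tri j)) := by
      apply hrhs.symm.trans
      rw [← h1, hsplit]
      exact Cg.add hneg hpos
    -- multiply by (-1)^M
    have := Cg.mul hcomb (Cg.refl (n := n) (A := (-1:R)^M))
    have hone : (-1:R)^M * (-1:R)^M = 1 := by
      rw [← pow_add]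
      exact Even.neg_one_pow ⟨M, rfl⟩
    have hL : (E N)^3 * ((-1:R)^M) * ((-1:R)^M) = (E N)^3 := by
      rw [mul_assoc, hone, mul_one]
    rw [hL] at this
    apply this.trans
    intro j hj
    rw [mul_comm]
  -- now extract coefficient n
  have hco := hgoal n le_rfl
  rw [hco]
  have hCneg1 : ((-1:R))^M = PowerSeries.C ((-1:ℂ)^M) := by
    rw [map_pow, map_neg, map_one]
  have keyterm : ∀ (c : ℂ) (t : ℕ),
      (coeff n) (PowerSeries.C ((-1:ℂ)^M) * (PowerSeries.C c * X^t))
        = (-1:ℂ)^M * c * (if t = n then 1 else 0) := by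
    intro c t
    rw [← mul_assoc, ← map_mul, PowerSeries.coeff_C_mul, PowerSeries.coeff_X_pow]
    rw [show ((if n = t then (1:ℂ) else 0) = if t = n then 1 else 0) from by
      rcases eq_or_ne n t with hh | hh
      · rw [if_pos hh, if_pos hh.symm]
      · rw [if_neg hh, if_neg (Ne.symm hh)]]
  rw [hCneg1, mul_add, Finset.mul_sum, Finset.mul_sum, map_add, map_sum, map_sum]
  have hA : ∀ j, (coeff n) (PowerSeries.C ((-1:ℂ)^M)
        * (PowerSeries.C (((N-1-j:ℕ):ℂ) * (-1)^(N-j)) * X^(tri j)))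
      = (-1:ℂ)^M * (((N-1-j:ℕ):ℂ) * (-1)^(N-j)) * (if tri j = n then 1 else 0) :=
    fun j => keyterm _ _
  have hB : ∀ j, (coeff n) (PowerSeries.C ((-1:ℂ)^M)
        * (PowerSeries.C (((N+j:ℕ):ℂ) * (-1)^(N+j-1)) * X^(tri j)))
      = (-1:ℂ)^M * (((N+j:ℕ):ℂ) * (-1)^(N+j-1)) * (if tri j = n then 1 else 0) :=
    fun j => keyterm _ _
  rw [Finset.sum_congr rfl (fun j _ => hA j), Finset.sum_congr rfl (fun j _ => hB j)]
  -- extend the first sum from range N to range (N+1)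
  have hext : ∑ j ∈ range (N+1), (-1:ℂ)^M * (((N-1-j:ℕ):ℂ) * (-1)^(N-j)) * (if tri j = n then 1 else 0)
      = ∑ j ∈ range N, (-1:ℂ)^M * (((N-1-j:ℕ):ℂ) * (-1)^(N-j)) * (if tri j = n then 1 else 0) := by
    rw [Finset.sum_range_succ]
    have hz : (if tri N = n then (1:ℂ) else 0) = 0 := by
      rw [if_neg]
      have := le_tri N
      omega
    rw [hz, mul_zero, add_zero]
  rw [← hext, ← Finset.sum_add_distrib]
  rw [show M + 2 = N + 1 from rfl]
  apply Finset.sum_congr rfl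
  intro j hj
  rw [Finset.mem_range] at hj
  rcases eq_or_ne (tri j) n with htri | htri
  · simp only [if_pos htri, mul_one]
    have hjn : j ≤ n := by have := le_tri j; omega
    have hjM : j ≤ M := by omega
    have e1 : (-1:ℂ)^M * (-1:ℂ)^(N-j) = (-1:ℂ)^(j+1) := by
      rw [← pow_add, show M + (N-j) = 2*(M-j) + (j+1) by omega, pow_add, pow_mul,
        neg_one_sq, one_pow, one_mul]
    have e2 : (-1:ℂ)^M * (-1:ℂ)^(N+j-1) = (-1:ℂ)^j := by
      rw [← pow_add, show M + (N+j-1) = 2*M + j by omega, pow_add, pow_mul,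
        neg_one_sq, one_pow, one_mul]
    have ecast : ((N+j:ℕ):ℂ) = ((N-1-j:ℕ):ℂ) + (2*(j:ℂ)+1) := by
      rw [show N+j = (N-1-j) + (2*j+1) by omega]
      push_cast
      ring
    linear_combination (((N-1-j:ℕ):ℂ)) * e1 + (((N+j:ℕ):ℂ)) * e2 + (-1:ℂ)^j * ecast
  · simp [if_neg htri]

/-! ## Analysis -/

open Filter Topology

lemma hasProd_one_add {g : ℕ → ℂ} (hg : Summable fun i => ‖g i‖) :
    HasProd (fun i => 1 + g i) (∑' t : Finset ℕ, ∏ i ∈ t, g i) := by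
  classical
  have hsum : Summable (fun t : Finset ℕ => ∏ i ∈ t, g i) := by
    apply Summable.of_norm
    apply summable_of_sum_le (c := Real.exp (∑' i, ‖g i‖)) (fun t => by positivity)
    intro T
    have hsub : T ⊆ (T.sup id).powerset := by
      intro t ht
      exact Finset.mem_powerset.mpr (Finset.le_sup (f := id) ht)
    calc ∑ t ∈ T, ‖∏ i ∈ t, g i‖ ≤ ∑ t ∈ (T.sup id).powerset, ‖∏ i ∈ t, g i‖ :=
          Finset.sum_le_sum_of_subset_of_nonneg hsub (fun _ _ _ => by positivity)
      _ = ∑ t ∈ (T.sup id).powerset, ∏ i ∈ t, ‖g i‖ :=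
          Finset.sum_congr rfl (fun t _ => norm_prod t g)
      _ = ∏ i ∈ T.sup id, (‖g i‖ + 1) := by
          rw [Finset.prod_add]
          apply Finset.sum_congr rfl
          intro t _
          rw [Finset.prod_const_one, mul_one]
      _ ≤ ∏ i ∈ T.sup id, Real.exp ‖g i‖ :=
          Finset.prod_le_prod (fun i _ => by positivity)
            (fun i _ => by
              have := Real.add_one_le_exp ‖g i‖
              linarith)
      _ = Real.exp (∑ i ∈ T.sup id, ‖g i‖) := (Real.exp_sum _ _).symm
      _ ≤ Real.exp (∑' i, ‖g i‖) :=
          Real.exp_le_exp.mpr (Summable.sum_le_tsum _ (fun _ _ => norm_nonneg _) hg)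
  have hps : Tendsto (fun s : Finset ℕ => s.powerset) atTop atTop :=
    tendsto_atTop_finset_of_monotone (fun s t hst => Finset.powerset_mono.mpr hst)
      (fun t => ⟨t, Finset.mem_powerset_self t⟩)
  have hcomp := (hsum.hasSum.comp hps)
  have heq : ∀ s : Finset ℕ, ∏ i ∈ s, (1 + g i) = ∑ t ∈ s.powerset, ∏ i ∈ t, g i := by
    intro s
    have h1 : ∏ i ∈ s, (1 + g i) = ∏ i ∈ s, (g i + 1) :=
      Finset.prod_congr rfl (fun i _ => by ring)
    rw [h1, Finset.prod_add]
    apply Finset.sum_congr rfl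
    intro t _
    rw [Finset.prod_const_one, mul_one]
  unfold HasProd
  have : (fun s : Finset ℕ => ∏ i ∈ s, (1 + g i))
      = (fun T : Finset (Finset ℕ) => ∑ t ∈ T, ∏ i ∈ t, g i) ∘ (fun s => s.powerset) := by
    funext s
    exact heq s
  rw [this]
  exact hcomp

lemma summable_norm_pow {x : ℂ} (hx : ‖x‖ < 1) :
    Summable fun i : ℕ => ‖(-(x^(i+1)) : ℂ)‖ := by
  simp only [norm_neg, norm_pow]
  have h := (summable_geometric_of_lt_one (norm_nonneg x) hx).mul_right ‖x‖
  apply h.congr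
  intro i
  rw [pow_succ]

lemma tendsto_partial_prods {x : ℂ} (hx : ‖x‖ < 1) :
    Tendsto (fun N => ∏ m ∈ range N, (1 - x^(m+1))) atTop
      (𝓝 (∏' m : ℕ, (1 - x^(m+1)))) := by
  have hp := hasProd_one_add (summable_norm_pow hx)
  have heq : (fun m : ℕ => 1 + (-(x^(m+1)))) = fun m => 1 - x^(m+1) :=
    funext fun m => by ring
  rw [heq] at hp
  exact hp.multipliable.hasProd.tendsto_prod_nat

def EP (N : ℕ) : Polynomial ℂ := ∏ m ∈ range N, (1 - Polynomial.X^(m+1))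

lemma EP_coe (N : ℕ) : ((EP N : Polynomial ℂ) : R) = E N := by
  rw [EP, E]
  induction N with
  | zero => simp
  | succ n ih =>
    rw [Finset.prod_range_succ, Finset.prod_range_succ, Polynomial.coe_mul, ih,
      Polynomial.coe_sub, Polynomial.coe_pow, Polynomial.coe_X, Polynomial.coe_one]

lemma EP_eval (N : ℕ) (x : ℂ) : (EP N).eval x = ∏ m ∈ range N, (1 - x^(m+1)) := by
  rw [EP, Polynomial.eval_prod]
  apply Finset.prod_congr rfl
  intro m _
  rw [Polynomial.eval_sub, Polynomial.eval_one, Polynomial.eval_pow, Polynomial.eval_X]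

def QP (N : ℕ) : Polynomial ℝ := ∏ m ∈ range N, (1 + Polynomial.X^(m+1))

def Dom (p : Polynomial ℂ) (q : Polynomial ℝ) : Prop := ∀ j, ‖p.coeff j‖ ≤ q.coeff j

lemma Dom.nonneg {p q} (h : Dom p q) (j : ℕ) : 0 ≤ q.coeff j :=
  le_trans (norm_nonneg _) (h j)

lemma Dom.mul {p p' q q'} (h : Dom p q) (h' : Dom p' q') : Dom (p * p') (q * q') := by
  intro j
  rw [Polynomial.coeff_mul, Polynomial.coeff_mul]
  calc ‖∑ z ∈ Finset.HasAntidiagonal.antidiagonal j, p.coeff z.1 * p'.coeff z.2‖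
      ≤ ∑ z ∈ Finset.HasAntidiagonal.antidiagonal j, ‖p.coeff z.1 * p'.coeff z.2‖ := norm_sum_le _ _
    _ ≤ ∑ z ∈ Finset.HasAntidiagonal.antidiagonal j, q.coeff z.1 * q'.coeff z.2 := by
        apply Finset.sum_le_sum
        intro z _
        rw [norm_mul]
        exact mul_le_mul (h z.1) (h' z.2) (norm_nonneg _) (h.nonneg z.1)

lemma dom_one_sub (m : ℕ) : Dom (1 - Polynomial.X^(m+1)) (1 + Polynomial.X^(m+1)) := by
  intro j
  simp only [Polynomial.coeff_sub, Polynomial.coeff_add, Polynomial.coeff_one,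
    Polynomial.coeff_X_pow]
  split_ifs <;> norm_num

lemma dom_EP (N : ℕ) : Dom (EP N) (QP N) := by
  rw [EP, QP]
  induction N with
  | zero =>
    simp only [Finset.prod_range_zero]
    intro j
    rcases eq_or_ne j 0 with h0 | h0
    · subst h0; rw [Polynomial.coeff_one, Polynomial.coeff_one]; norm_num
    · rw [Polynomial.coeff_one, Polynomial.coeff_one, if_neg h0, if_neg h0]; norm_num
  | succ n ih =>
    rw [Finset.prod_range_succ, Finset.prod_range_succ]
    exact ih.mul (dom_one_sub n)

lemma dom_EP_cube (N : ℕ) : Dom ((EP N)^3) ((QP N)^3) := by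
  have h := dom_EP N
  have h2 := (h.mul h).mul h
  rw [show (EP N)^3 = EP N * EP N * EP N by ring, show (QP N)^3 = QP N * QP N * QP N by ring]
  exact h2

lemma QP_eval_le {r : ℝ} (hr0 : 0 ≤ r) (hr1 : r < 1) (N : ℕ) :
    (QP N).eval r ≤ Real.exp ((1-r)⁻¹) := by
  rw [QP, Polynomial.eval_prod]
  have h1 : ∀ m ∈ range N, Polynomial.eval r (1 + Polynomial.X^(m+1)) = 1 + r^(m+1) := by
    intro m _
    rw [Polynomial.eval_add, Polynomial.eval_one, Polynomial.eval_pow, Polynomial.eval_X]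
  rw [Finset.prod_congr rfl h1]
  calc ∏ m ∈ range N, (1 + r^(m+1))
      ≤ ∏ m ∈ range N, Real.exp (r^(m+1)) := by
        apply Finset.prod_le_prod
        · intro m _; positivity
        · intro m _
          have := Real.add_one_le_exp (r^(m+1))
          linarith
    _ = Real.exp (∑ m ∈ range N, r^(m+1)) := (Real.exp_sum _ _).symm
    _ ≤ Real.exp ((1-r)⁻¹) := by
        apply Real.exp_le_exp.mpr
        calc ∑ m ∈ range N, r^(m+1) ≤ ∑ m ∈ range N, r^m := by
              apply Finset.sum_le_sum
              intro m _
              exact pow_le_pow_of_le_one hr0 (le_of_lt hr1) (by omega)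
          _ ≤ ∑' m : ℕ, r^m := Summable.sum_le_tsum _ (fun m _ => by positivity)
              (summable_geometric_of_lt_one hr0 hr1)
          _ = (1-r)⁻¹ := tsum_geometric_of_lt_one hr0 hr1

/-- the coefficient sequence of the RHS -/
def e (n : ℕ) : ℂ := ∑ j ∈ range (n+1), (if tri j = n then ((-1:ℂ))^j * (2*j+1) else 0)

lemma sumIf_stable {n K : ℕ} (h : n + 1 ≤ K) :
    ∑ j ∈ range K, (if tri j = n then ((-1:ℂ))^j * (2*j+1) else 0) = e n := by
  rw [e]
  symm
  apply Finset.sum_subset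
  · exact Finset.range_subset_range.mpr h
  · intro j _ hj
    rw [Finset.mem_range, not_lt] at hj
    rw [if_neg]
    have := le_tri j
    omega

lemma cube_coeff {n N : ℕ} (h : 2*n+2 ≤ N) : ((EP N)^3).coeff n = e n := by
  have hN : N - 1 + 1 = N := by omega
  have hcore := core n (N-1) (by omega)
  rw [hN] at hcore
  have hcoe : (PowerSeries.coeff n) ((E N)^3) = ((EP N)^3).coeff n := by
    rw [← EP_coe, ← Polynomial.coe_pow, Polynomial.coeff_coe]
  rw [← hcoe, hcore]
  rw [show N - 1 + 2 = N + 1 by omega]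
  exact sumIf_stable (by omega)

lemma e_tri (k : ℕ) : e (tri k) = ((-1:ℂ))^k * (2*k+1) := by
  rw [e, Finset.sum_eq_single k]
  · rw [if_pos rfl]
  · intro j _ hj
    rw [if_neg (fun hc => hj (tri_strictMono.injective hc))]
  · intro hk
    exfalso
    apply hk
    rw [Finset.mem_range]
    have := le_tri k
    omega

lemma e_eq_zero_of_not_range {j : ℕ} (h : ∀ k, tri k ≠ j) : e j = 0 := by
  rw [e]
  apply Finset.sum_eq_zero
  intro k _
  rw [if_neg (h k)]

lemma e_bound (j : ℕ) : ‖e j‖ ≤ (j+1) * (2*j+1) := by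
  rw [e]
  calc ‖∑ k ∈ range (j+1), (if tri k = j then ((-1:ℂ))^k * (2*k+1) else 0)‖
      ≤ ∑ k ∈ range (j+1), ‖(if tri k = j then ((-1:ℂ))^k * (2*k+1) else 0)‖ := norm_sum_le _ _
    _ ≤ ∑ k ∈ range (j+1), ((2:ℝ)*j+1) := by
        apply Finset.sum_le_sum
        intro k hk
        rw [Finset.mem_range] at hk
        split_ifs with hc
        · rw [norm_mul, norm_pow, norm_neg, norm_one, one_pow, one_mul]
          have : ‖(2*(k:ℂ)+1)‖ = 2*(k:ℝ)+1 := by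
            rw [show (2*(k:ℂ)+1) = ((2*(k:ℝ)+1 : ℝ) : ℂ) by push_cast; ring,
              Complex.norm_real]
            rw [Real.norm_of_nonneg (by positivity)]
          rw [this]
          have : (k:ℝ) ≤ j := by exact_mod_cast Nat.le_of_lt_succ hk
          linarith
        · rw [norm_zero]; positivity
    _ = (j+1) * (2*j+1) := by
        rw [Finset.sum_const, Finset.card_range]
        push_cast
        ring

lemma QP_eval_eq (N : ℕ) (r : ℝ) : (QP N).eval r = ∏ m ∈ range N, (1 + r^(m+1)) := by
  rw [QP, Polynomial.eval_prod]
  apply Finset.prod_congr rfl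
  intro m _
  rw [Polynomial.eval_add, Polynomial.eval_one, Polynomial.eval_pow, Polynomial.eval_X]

lemma QP_eval_nonneg {r : ℝ} (hr0 : 0 ≤ r) (N : ℕ) : 0 ≤ (QP N).eval r := by
  rw [QP_eval_eq]
  apply Finset.prod_nonneg
  intro m _
  positivity

theorem main (x : ℂ) (hx : ‖x‖ < 1) :
    (∏' m : ℕ, (1 - x ^ (m + 1))) ^ 3
      = ∑' n : ℕ, (-1 : ℂ) ^ n * (2 * (n : ℂ) + 1) * x ^ (n * (n + 1) / 2) := by
  have hx0 : 0 ≤ ‖x‖ := norm_nonneg x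
  set r : ℝ := (1 + ‖x‖) / 2 with hrdef
  have hr0 : 0 < r := by rw [hrdef]; positivity
  have hxr : ‖x‖ < r := by rw [hrdef]; linarith
  have hr1 : r < 1 := by rw [hrdef]; linarith
  set q0 : ℝ := ‖x‖ / r with hq0def
  have hq00 : 0 ≤ q0 := by positivity
  have hq01 : q0 < 1 := by rw [hq0def, div_lt_one hr0]; exact hxr
  have hxq : ‖x‖ = r * q0 := by rw [hq0def]; field_simp
  set B : ℝ := (Real.exp ((1-r)⁻¹))^3 with hBdef
  have hB0 : 0 ≤ B := by positivity
  set P : ℂ := ∏' m : ℕ, (1 - x ^ (m + 1)) with hPdef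
  set S : ℕ → ℂ := fun M => ∑ j ∈ range M, e j * x^j with hSdef
  -- step 1 : partial cubes converge to P^3
  have h1 : Tendsto (fun N => ((EP N)^3).eval x) atTop (𝓝 (P^3)) := by
    have hT := (tendsto_partial_prods hx).pow 3
    apply hT.congr
    intro N
    rw [Polynomial.eval_pow, EP_eval]
  -- step 2 : quantitative bound
  have key : ∀ M N : ℕ, 2*M+2 ≤ N → ‖((EP N)^3).eval x - S M‖ ≤ B * q0^M := by
    intro M N hMN
    set p : Polynomial ℂ := (EP N)^3 with hpdef
    set D : ℕ := max (p.natDegree + 1) (max (((QP N)^3).natDegree + 1) M) with hDdef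
    have hDp : p.natDegree < D := lt_of_lt_of_le (Nat.lt_succ_self _) (le_max_left _ _)
    have hDq : ((QP N)^3).natDegree < D :=
      lt_of_lt_of_le (Nat.lt_succ_self _) (le_trans (le_max_left _ _) (le_max_right _ _))
    have hDM : M ≤ D := le_trans (le_max_right _ _) (le_max_right _ _)
    have hev : p.eval x = ∑ j ∈ range D, p.coeff j * x^j := Polynomial.eval_eq_sum_range' hDp x
    have hSM : S M = ∑ j ∈ range M, p.coeff j * x^j := by
      apply Finset.sum_congr rfl
      intro j hj
      rw [Finset.mem_range] at hj
      rw [hpdef, cube_coeff (show 2*j+2 ≤ N by omega)]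
    have hsplit : ∑ j ∈ range D, p.coeff j * x^j
        = ∑ j ∈ range M, p.coeff j * x^j + ∑ j ∈ Finset.Ico M D, p.coeff j * x^j := by
      rw [Finset.range_eq_Ico,
        ← Finset.sum_Ico_consecutive _ (Nat.zero_le M) hDM, ← Finset.range_eq_Ico]
    rw [hev, hSM, hsplit, add_sub_cancel_left]
    calc ‖∑ j ∈ Finset.Ico M D, p.coeff j * x^j‖
        ≤ ∑ j ∈ Finset.Ico M D, ‖p.coeff j * x^j‖ := norm_sum_le _ _
      _ ≤ ∑ j ∈ Finset.Ico M D, ((QP N)^3).coeff j * r^j * q0^M := by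
          apply Finset.sum_le_sum
          intro j hj
          rw [Finset.mem_Ico] at hj
          rw [norm_mul, norm_pow, hxq, mul_pow]
          have hc := dom_EP_cube N j
          have hq : q0^j ≤ q0^M := pow_le_pow_of_le_one hq00 (le_of_lt hq01) hj.1
          calc ‖p.coeff j‖ * (r^j * q0^j) ≤ ((QP N)^3).coeff j * (r^j * q0^M) := by
                apply mul_le_mul hc ?_ (by positivity) ((dom_EP_cube N).nonneg j)
                exact mul_le_mul_of_nonneg_left hq (by positivity)
            _ = ((QP N)^3).coeff j * r^j * q0^M := by ring
      _ = (∑ j ∈ Finset.Ico M D, ((QP N)^3).coeff j * r^j) * q0^M := by rw [Finset.sum_mul]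
      _ ≤ B * q0^M := by
          apply mul_le_mul_of_nonneg_right ?_ (by positivity)
          calc ∑ j ∈ Finset.Ico M D, ((QP N)^3).coeff j * r^j
              ≤ ∑ j ∈ range D, ((QP N)^3).coeff j * r^j := by
                apply Finset.sum_le_sum_of_subset_of_nonneg
                · rw [Finset.range_eq_Ico]
                  exact Finset.Ico_subset_Ico (Nat.zero_le M) le_rfl
                · intro j _ _
                  have := (dom_EP_cube N).nonneg j
                  positivity
            _ = ((QP N)^3).eval r := (Polynomial.eval_eq_sum_range' hDq r).symm
            _ = ((QP N).eval r)^3 := by rw [Polynomial.eval_pow]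
            _ ≤ B := by
                rw [hBdef]
                exact pow_le_pow_left₀ (QP_eval_nonneg (le_of_lt hr0) N)
                  (QP_eval_le (le_of_lt hr0) hr1 N) 3
  -- step 3 : limit of the bound over N
  have h3 : ∀ M : ℕ, ‖P^3 - S M‖ ≤ B * q0^M := by
    intro M
    have hl : Tendsto (fun N => ‖((EP N)^3).eval x - S M‖) atTop (𝓝 ‖P^3 - S M‖) :=
      (h1.sub tendsto_const_nhds).norm
    apply le_of_tendsto hl
    filter_upwards [eventually_ge_atTop (2*M+2)] with N hN
    exact key M N hN
  -- step 4 : S → P^3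
  have h4 : Tendsto S atTop (𝓝 (P^3)) := by
    have hz : Tendsto (fun M : ℕ => B * q0^M) atTop (𝓝 0) := by
      have := (tendsto_pow_atTop_nhds_zero_of_lt_one hq00 hq01).const_mul B
      simpa using this
    have hsq : Tendsto (fun M => ‖S M - P^3‖) atTop (𝓝 0) :=
      squeeze_zero (fun M => norm_nonneg _)
        (fun M => by rw [norm_sub_rev]; exact h3 M) hz
    exact tendsto_iff_norm_sub_tendsto_zero.mpr hsq
  -- step 5 : summability and HasSum
  have h5 : Summable (fun j : ℕ => e j * x^j) := by
    apply Summable.of_norm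
    have hxn : ‖(‖x‖ : ℝ)‖ < 1 := by rwa [Real.norm_of_nonneg hx0]
    have s2 := summable_pow_mul_geometric_of_norm_lt_one 2 hxn
    have s1 := summable_pow_mul_geometric_of_norm_lt_one 1 hxn
    have s0 := summable_pow_mul_geometric_of_norm_lt_one 0 hxn
    have hsum2 : Summable (fun j : ℕ => ((j:ℝ)+1) * (2*j+1) * ‖x‖^j) := by
      have hfe : (fun j : ℕ => ((j:ℝ)+1) * (2*j+1) * ‖x‖^j)
          = fun j : ℕ => 2*((j:ℝ)^2*‖x‖^j) + (3*((j:ℝ)^1*‖x‖^j) + (j:ℝ)^0*‖x‖^j) :=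
        funext fun j => by ring
      rw [hfe]
      exact (s2.mul_left 2).add ((s1.mul_left 3).add s0)
    apply Summable.of_nonneg_of_le (fun j => norm_nonneg _) ?_ hsum2
    intro j
    rw [norm_mul, norm_pow]
    exact mul_le_mul_of_nonneg_right (e_bound j) (pow_nonneg hx0 j)
  have h6 : HasSum (fun j : ℕ => e j * x^j) (P^3) := by
    rw [Summable.hasSum_iff_tendsto_nat h5]
    exact h4
  have h7 : ∑' j : ℕ, e j * x^j = P^3 := h6.tsum_eq
  -- step 6 : reindex along triangular numbers
  have h8 : ∑' k : ℕ, (e (tri k) * x^(tri k)) = ∑' j : ℕ, e j * x^j := by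
    apply Function.Injective.tsum_eq (f := fun j : ℕ => e j * x ^ j) tri_strictMono.injective
    intro j hj
    by_contra hnot
    apply hj
    have hz : e j = 0 := by
      apply e_eq_zero_of_not_range
      intro k hk
      exact hnot ⟨k, hk⟩
    simp [hz]
  calc P^3 = ∑' j : ℕ, e j * x^j := h7.symm
    _ = ∑' k : ℕ, e (tri k) * x^(tri k) := h8.symm
    _ = ∑' n : ℕ, (-1:ℂ)^n * (2*(n:ℂ)+1) * x^(n*(n+1)/2) := by
        apply tsum_congr
        intro k
        rw [e_tri k]
        rfl

end JacobiAux

/-- Jacobi's identity for the cube of Euler's product: for `‖x‖ < 1`,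
`(∏_{m=1}^∞ (1 - x^m))³ = ∑_{n=0}^∞ (-1)^n (2n+1) x^{n(n+1)/2}`. -/
theorem jacobi_cube_identity (x : ℂ) (hx : ‖x‖ < 1) :
    (∏' m : ℕ, (1 - x ^ (m + 1))) ^ 3 =
      ∑' n : ℕ, (-1 : ℂ) ^ n * (2 * (n : ℂ) + 1) * x ^ (n * (n + 1) / 2) := by
  exact JacobiAux.main x hx
end
end
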